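/- arXiv:math/0503093 — 9 statements merged into one kernel-verified Lean document; each statement's English description precedes it below -/
import Mathlib

section
/- Let A be a Banach algebra over ℂ, let I be a closed two-sided ideal in A, and suppose A is I-weakly amenable. Let φ : A → ℂ be a character (a nonzero continuous multiplicative linear functional) such that I is not contained in ker φ. Then there is no nonzero continuous point derivation at φ: every continuous linear functional d : A → ℂ satisfying d(ab) = φ(a)d(b) + d(a)φ(b) for all a, b ∈ A is zero. -/
/-- If `A` is `I`-weakly amenable for a closed two-sided ideal `I` and
`φ` is a character of `A` with `I ⊄ ker φ`, then there is no nonzero continuous point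
derivation at `φ`. -/
theorem no_nonzero_point_derivation_of_iWeaklyAmenable
    {A : Type*} [NonUnitalNormedRing A] [NormedSpace ℂ A]
    [IsScalarTower ℂ A A] [SMulCommClass ℂ A A] [CompleteSpace A]
    (I : Submodule ℂ A) (hIclosed : IsClosed (I : Set A))
    (hI : ∀ a : A, ∀ x ∈ I, a * x ∈ I ∧ x * a ∈ I)
    -- `A` is `I`-weakly amenable
    (hIWA : ∀ D : A →L[ℂ] (↥I →L[ℂ] ℂ),
      (∀ a b : A, ∀ i : ↥I,
        D (a * b) i = D b ⟨(i : A) * a, (hI a i i.2).2⟩ +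
          D a ⟨b * (i : A), (hI b i i.2).1⟩) →
      ∃ f : ↥I →L[ℂ] ℂ, ∀ a : A, ∀ i : ↥I,
        D a i = f ⟨(i : A) * a - a * (i : A),
          I.sub_mem (hI a i i.2).2 (hI a i i.2).1⟩)
    -- `φ` is a character with `I ⊄ ker φ`
    (φ : A →L[ℂ] ℂ) (hφmul : ∀ a b : A, φ (a * b) = φ a * φ b) (hφne : φ ≠ 0)
    (hIφ : ¬ ∀ i ∈ I, φ i = 0)
    -- `d` is a continuous point derivation at `φ`
    (d : A →L[ℂ] ℂ) (hd : ∀ a b : A, d (a * b) = φ a * d b + d a * φ b) :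
    d = 0 := by
  push_neg at hIφ
  obtain ⟨i₀, hi₀I, hφi₀⟩ := hIφ
  -- the derivation D a = d a • (φ ∘ inclusion)
  set ψ : ↥I →L[ℂ] ℂ := φ.comp (Submodule.subtypeL I) with hψ
  set D : A →L[ℂ] (↥I →L[ℂ] ℂ) := d.smulRight ψ with hD
  have hDapp : ∀ a : A, ∀ i : ↥I, D a i = d a * φ (i : A) := by
    intro a i
    simp [hD, hψ, smul_eq_mul]
  obtain ⟨f, hf⟩ := hIWA D (by
    intro a b i
    rw [hDapp, hDapp, hDapp]
    show d (a * b) * φ (i : A) = d b * φ ((i : A) * a) + d a * φ (b * (i : A))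
    rw [hd a b, hφmul, hφmul]; ring)
  set j : ↥I := ⟨i₀, hi₀I⟩ with hj
  have hjj : (i₀ : A) * i₀ ∈ I := (hI i₀ i₀ hi₀I).1
  have key : ∀ a : A, 2 * (φ a * d i₀) + d a * φ i₀ = 0 := by
    intro a
    have h2 := hf (a * i₀) j
    have h3 := hf (i₀ * a) j
    have h4 := hf a ⟨i₀ * i₀, hjj⟩
    rw [hDapp] at h2 h3 h4
    have hsum : d (a * i₀) * φ ((j : A)) + d (i₀ * a) * φ ((j : A))
        = d a * φ ((⟨i₀ * i₀, hjj⟩ : ↥I) : A) := by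
      rw [h2, h3, h4, ← map_add]
      congr 1
      apply Subtype.ext
      show ((j : A) * (a * i₀) - (a * i₀) * (j : A)) +
          ((j : A) * (i₀ * a) - (i₀ * a) * (j : A)) =
          (i₀ * i₀) * a - a * (i₀ * i₀)
      rw [hj]
      noncomm_ring
    have hjc : φ ((j : A)) = φ i₀ := by rw [hj]
    have hjjc : φ ((⟨i₀ * i₀, hjj⟩ : ↥I) : A) = φ i₀ * φ i₀ := by
      show φ (i₀ * i₀) = φ i₀ * φ i₀
      exact hφmul i₀ i₀
    rw [hjc, hjjc, hd a i₀, hd i₀ a] at hsum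
    -- hsum : (φ a * d i₀ + d a * φ i₀) * φ i₀ + (φ i₀ * d a + d i₀ * φ a) * φ i₀
    --        = d a * (φ i₀ * φ i₀)
    have h5 : (2 * (φ a * d i₀) + d a * φ i₀) * φ i₀ = 0 := by
      linear_combination hsum
    exact (mul_eq_zero.mp h5).resolve_right hφi₀
  have hdi₀ : d i₀ = 0 := by
    have h6 : 3 * (d i₀ * φ i₀) = 0 := by linear_combination key i₀
    have h7 : d i₀ * φ i₀ = 0 :=
      (mul_eq_zero.mp h6).resolve_left (by norm_num)
    exact (mul_eq_zero.mp h7).resolve_right hφi₀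
  ext a
  have h8 : d a * φ i₀ = 0 := by linear_combination key a - 2 * φ a * hdi₀
  simpa using (mul_eq_zero.mp h8).resolve_right hφi₀
end

section
/- Let A be a weakly amenable Banach algebra over ℂ such that A is I-weakly amenable for every closed two-sided ideal I of A satisfying I = the closed linear span of {ai : a ∈ A, i ∈ I} ∪ {ia : a ∈ A, i ∈ I}. Then A is ideally amenable, i.e. A is I-weakly amenable for every closed two-sided ideal I of A. -/
/-!
Weak amenability forces the products to span a dense subspace of `A`: a functional `l` vanishing
on all products makes `a ↦ l a • l` a derivation, and its innerness gives `l a ^ 2 = 0`.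
For a closed ideal `I`, the closed span `J` of `A I ∪ I A` is then an ideal with the same property
`J = closure (A J + J A)`, so the restriction of a derivation `D : A → I*` to `J` is implemented by
some `g ∈ J*`. Extend `g` to `f ∈ I*` by Hahn–Banach. The identity
`D (b c) i = D c (i b) + D b (c i)` only evaluates `D` on `J`, so `D` agrees with the inner
derivation of `f` on products, hence everywhere.
-/

open Submodule

section

variable {𝕜 : Type*} [RCLike 𝕜]

section TopologicalModule

theorem Submodule.apply_mem_of_mem_closure_span {R E F : Type*} [Semiring R]
    [AddCommMonoid E] [Module R E] [TopologicalSpace E] [ContinuousAdd E] [ContinuousConstSMul R E]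
    [AddCommMonoid F] [Module R F] [TopologicalSpace F]
    (T : E →L[R] F) {s : Set E} {K : Submodule R F} (hK : IsClosed (K : Set F))
    (hsK : Set.MapsTo T s K) {x : E} (hx : x ∈ closure (span R s : Set E)) : T x ∈ K :=
  (span R s).topologicalClosure_minimal (t := K.comap (T : E →ₗ[R] F)) (span_le.2 hsK)
    (hK.preimage T.continuous) hx

variable {E : Type*} [NormedAddCommGroup E] [NormedSpace 𝕜 E]

theorem Submodule.dense_of_forall_dual_eq_zero {p : Submodule 𝕜 E}
    (h : ∀ l : StrongDual 𝕜 E, (∀ x ∈ p, l x = 0) → l = 0) : Dense (p : Set E) := by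
  set P := p.topologicalClosure
  have : IsClosed (P : Set E) := p.isClosed_topologicalClosure
  refine dense_iff_topologicalClosure_eq_top.2 (eq_top_iff'.2 fun x => ?_)
  rw [← Quotient.mk_eq_zero]
  refine SeparatingDual.eq_zero_of_forall_dual_eq_zero (R := 𝕜) fun g => ?_
  have hg : g ∘L P.mkQL = 0 := h _ fun y hy => by
    simp [(Quotient.mk_eq_zero P).2 (p.le_topologicalClosure hy)]
  exact congr($hg x)

theorem StrongDual.exists_extension_of_le {p q : Submodule 𝕜 E} (hpq : p ≤ q)
    (g : StrongDual 𝕜 p) : ∃ f : StrongDual 𝕜 q, ∀ x : p, f ⟨x, hpq x.2⟩ = g x := by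
  obtain ⟨F, hF, -⟩ := exists_extension_norm_eq p g
  exact ⟨F ∘L q.subtypeL, hF⟩

end TopologicalModule

def WeaklyAmenable (𝕜 A : Type*) [RCLike 𝕜] [NonUnitalNormedRing A] [NormedSpace 𝕜 A] : Prop :=
  ∀ D : A →L[𝕜] (A →L[𝕜] 𝕜), (∀ a b c : A, D (a * b) c = D b (c * a) + D a (b * c)) →
    ∃ f : A →L[𝕜] 𝕜, ∀ a b : A, D a b = f (b * a - a * b)

namespace WeaklyAmenable

variable {A : Type*} [NonUnitalNormedRing A] [NormedSpace 𝕜 A]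

theorem eq_zero_of_forall_mul_eq_zero (hA : WeaklyAmenable 𝕜 A) {l : StrongDual 𝕜 A}
    (hl : ∀ a b, l (a * b) = 0) : l = 0 := by
  obtain ⟨f, hf⟩ := hA (l.smulRight l) fun a b c => by simp [hl]
  ext a
  simpa using hf a a

theorem dense_span_mul (hA : WeaklyAmenable 𝕜 A) :
    Dense (span 𝕜 {x : A | ∃ a b, x = a * b} : Set A) :=
  dense_of_forall_dual_eq_zero fun _ hl =>
    hA.eq_zero_of_forall_mul_eq_zero fun a b => hl _ (subset_span ⟨a, b, rfl⟩)

end WeaklyAmenable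

namespace Submodule

variable {A : Type*} [NonUnitalNormedRing A] [NormedSpace 𝕜 A]

def IsTwoSidedIdeal (I : Submodule 𝕜 A) : Prop :=
  ∀ a : A, ∀ x ∈ I, a * x ∈ I ∧ x * a ∈ I

def essentialPart (I : Submodule 𝕜 A) : Submodule 𝕜 A :=
  (span 𝕜 {x : A | ∃ a : A, ∃ i ∈ I, x = a * i ∨ x = i * a}).topologicalClosure

theorem isClosed_essentialPart (I : Submodule 𝕜 A) : IsClosed (I.essentialPart : Set A) :=
  isClosed_topologicalClosure _

variable {I : Submodule 𝕜 A}

theorem mul_mem_essentialPart_left (a : A) {i : A} (hi : i ∈ I) : a * i ∈ I.essentialPart :=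
  le_topologicalClosure _ (subset_span ⟨a, i, hi, .inl rfl⟩)

theorem mul_mem_essentialPart_right (a : A) {i : A} (hi : i ∈ I) : i * a ∈ I.essentialPart :=
  le_topologicalClosure _ (subset_span ⟨a, i, hi, .inr rfl⟩)

namespace IsTwoSidedIdeal

theorem essentialPart_le (hI : I.IsTwoSidedIdeal) (hIc : IsClosed (I : Set A)) :
    I.essentialPart ≤ I := by
  refine topologicalClosure_minimal _ (span_le.2 ?_) hIc
  rintro _ ⟨a, i, hi, rfl | rfl⟩
  exacts [(hI a i hi).1, (hI a i hi).2]

def IsDerivation (hI : I.IsTwoSidedIdeal) (D : A →L[𝕜] (I →L[𝕜] 𝕜)) : Prop :=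
  ∀ a b : A, ∀ i : I, D (a * b) i = D b ⟨i * a, (hI a i i.2).2⟩ + D a ⟨b * i, (hI b i i.2).1⟩

def IsInner (hI : I.IsTwoSidedIdeal) (D : A →L[𝕜] (I →L[𝕜] 𝕜)) : Prop :=
  ∃ f : I →L[𝕜] 𝕜, ∀ a : A, ∀ i : I,
    D a i = f ⟨i * a - a * i, I.sub_mem (hI a i i.2).2 (hI a i i.2).1⟩

/-- `A` is `I`-weakly amenable (a property of `A`, not of the algebra `I`). -/
def WeaklyAmenable (hI : I.IsTwoSidedIdeal) : Prop :=
  ∀ D : A →L[𝕜] (I →L[𝕜] 𝕜), hI.IsDerivation D → hI.IsInner D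

end IsTwoSidedIdeal

variable [IsScalarTower 𝕜 A A] [SMulCommClass 𝕜 A A]

theorem isTwoSidedIdeal_topologicalClosure_span {s : Set A}
    (hs : ∀ a : A, ∀ x ∈ s, a * x ∈ s ∧ x * a ∈ s) :
    (span 𝕜 s).topologicalClosure.IsTwoSidedIdeal := fun a _ hx =>
  have hsub : Set.MapsTo id s (span 𝕜 s).topologicalClosure := fun _ hy =>
    le_topologicalClosure _ (subset_span hy)
  ⟨apply_mem_of_mem_closure_span (ContinuousLinearMap.mul 𝕜 A a) (isClosed_topologicalClosure _)
      (fun y hy => hsub (hs a y hy).1) hx,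
    apply_mem_of_mem_closure_span ((ContinuousLinearMap.mul 𝕜 A).flip a)
      (isClosed_topologicalClosure _) (fun y hy => hsub (hs a y hy).2) hx⟩

namespace IsTwoSidedIdeal

theorem essentialPart (hI : I.IsTwoSidedIdeal) : I.essentialPart.IsTwoSidedIdeal := by
  refine isTwoSidedIdeal_topologicalClosure_span fun a x hx => ?_
  obtain ⟨b, i, hi, rfl | rfl⟩ := hx
  · exact ⟨⟨a * b, i, hi, .inl (mul_assoc a b i).symm⟩,
      ⟨b, i * a, (hI a i hi).2, .inl (mul_assoc b i a)⟩⟩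
  · exact ⟨⟨b, a * i, (hI a i hi).1, .inr (mul_assoc a i b).symm⟩,
      ⟨b * a, i, hi, .inr (mul_assoc i b a)⟩⟩

theorem essentialPart_essentialPart (hI : I.IsTwoSidedIdeal)
    (hA : Dense (span 𝕜 {x : A | ∃ a b, x = a * b} : Set A)) :
    I.essentialPart.essentialPart = I.essentialPart := by
  refine le_antisymm (hI.essentialPart.essentialPart_le (isClosed_essentialPart _))
    (topologicalClosure_minimal _ (span_le.2 ?_) (isClosed_essentialPart _))
  rintro _ ⟨a, i, hi, rfl | rfl⟩
  · refine apply_mem_of_mem_closure_span ((ContinuousLinearMap.mul 𝕜 A).flip i)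
      (isClosed_essentialPart _) ?_ (hA a)
    rintro _ ⟨b, c, rfl⟩
    simpa [mul_assoc] using mul_mem_essentialPart_left b (mul_mem_essentialPart_left c hi)
  · refine apply_mem_of_mem_closure_span (ContinuousLinearMap.mul 𝕜 A i)
      (isClosed_essentialPart _) ?_ (hA a)
    rintro _ ⟨b, c, rfl⟩
    simpa [mul_assoc] using mul_mem_essentialPart_right c (mul_mem_essentialPart_right b hi)

theorem weaklyAmenable_of_essentialPart (hI : I.IsTwoSidedIdeal)
    (hA : Dense (span 𝕜 {x : A | ∃ a b, x = a * b} : Set A)) (hIc : IsClosed (I : Set A))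
    (hJ : hI.essentialPart.WeaklyAmenable) : hI.WeaklyAmenable := by
  intro D hD
  have hJI := hI.essentialPart_le hIc
  let DJ : A →L[𝕜] (I.essentialPart →L[𝕜] 𝕜) :=
    (ContinuousLinearMap.compL 𝕜 _ I 𝕜).flip
      (I.essentialPart.subtypeL.codRestrict I fun j => hJI j.2) ∘L D
  obtain ⟨g, hg⟩ := hJ DJ fun a b j => hD a b ⟨j, hJI j.2⟩
  obtain ⟨f, hf⟩ := StrongDual.exists_extension_of_le hJI g
  refine ⟨f, fun a i => ?_⟩
  have hmul : ∀ b c : A, D (b * c) i = f ⟨i * (b * c) - b * c * i,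
      I.sub_mem (hI _ i i.2).2 (hI _ i i.2).1⟩ := by
    intro b c
    have hb := mul_mem_essentialPart_right b i.2
    have hc := mul_mem_essentialPart_left c i.2
    rw [hD, show D c ⟨i * b, _⟩ = DJ c ⟨i * b, hb⟩ from rfl,
      show D b ⟨c * i, _⟩ = DJ b ⟨c * i, hc⟩ from rfl, hg, hg, ← map_add, ← hf]
    congr 1
    ext
    simp only [AddMemClass.coe_add]
    noncomm_ring
  have hext := ContinuousLinearMap.ext_on hA (f := D.flip i)
    (g := f ∘L ((ContinuousLinearMap.mul 𝕜 A i - (ContinuousLinearMap.mul 𝕜 A).flip i).codRestrict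
      I fun a => I.sub_mem (hI a i i.2).2 (hI a i i.2).1))
    (by rintro _ ⟨b, c, rfl⟩; exact hmul b c)
  exact congr($hext a)

end IsTwoSidedIdeal

end Submodule

end

theorem ideallyAmenable_of_weaklyAmenable_and_essential_ideals_general
    {A : Type*} [NonUnitalNormedRing A] [NormedSpace ℂ A]
    [IsScalarTower ℂ A A] [SMulCommClass ℂ A A]
    -- `A` is weakly amenable
    (hWA : ∀ D : A →L[ℂ] (A →L[ℂ] ℂ),
      (∀ a b c : A, D (a * b) c = D b (c * a) + D a (b * c)) →
      ∃ f : A →L[ℂ] ℂ, ∀ a b : A, D a b = f (b * a - a * b))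
    -- `A` is `I`-weakly amenable for every closed two-sided ideal `I` with
    -- `I` equal to the closed linear span of `{a*i} ∪ {i*a}`
    (hEss : ∀ I : Submodule ℂ A, IsClosed (I : Set A) →
      ∀ hI : (∀ a : A, ∀ x ∈ I, a * x ∈ I ∧ x * a ∈ I),
      (Submodule.span ℂ {x : A | ∃ a : A, ∃ i ∈ I, x = a * i ∨ x = i * a}).topologicalClosure
        = I →
      ∀ D : A →L[ℂ] (↥I →L[ℂ] ℂ),
        (∀ a b : A, ∀ i : ↥I,
          D (a * b) i = D b ⟨(i : A) * a, (hI a i i.2).2⟩ +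
            D a ⟨b * (i : A), (hI b i i.2).1⟩) →
        ∃ f : ↥I →L[ℂ] ℂ, ∀ a : A, ∀ i : ↥I,
          D a i = f ⟨(i : A) * a - a * (i : A),
            I.sub_mem (hI a i i.2).2 (hI a i i.2).1⟩) :
    -- then `A` is ideally amenable
    ∀ I : Submodule ℂ A, IsClosed (I : Set A) →
      ∀ hI : (∀ a : A, ∀ x ∈ I, a * x ∈ I ∧ x * a ∈ I),
      ∀ D : A →L[ℂ] (↥I →L[ℂ] ℂ),
        (∀ a b : A, ∀ i : ↥I,
          D (a * b) i = D b ⟨(i : A) * a, (hI a i i.2).2⟩ +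
            D a ⟨b * (i : A), (hI b i i.2).1⟩) →
        ∃ f : ↥I →L[ℂ] ℂ, ∀ a : A, ∀ i : ↥I,
          D a i = f ⟨(i : A) * a - a * (i : A),
            I.sub_mem (hI a i i.2).2 (hI a i i.2).1⟩ := by
  intro I hIc hI
  have hA := WeaklyAmenable.dense_span_mul (𝕜 := ℂ) hWA
  have hJ : (IsTwoSidedIdeal.essentialPart hI).WeaklyAmenable :=
    hEss _ (isClosed_essentialPart I) (IsTwoSidedIdeal.essentialPart hI)
      (IsTwoSidedIdeal.essentialPart_essentialPart hI hA)
  exact IsTwoSidedIdeal.weaklyAmenable_of_essentialPart hI hA hIc hJ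

/-- If `A` is weakly amenable and `A` is `I`-weakly amenable for every
closed two-sided ideal `I` with `I = closure (span (A·I ∪ I·A))`, then `A` is ideally
amenable. -/
theorem ideallyAmenable_of_weaklyAmenable_and_essential_ideals
    {A : Type*} [NonUnitalNormedRing A] [NormedSpace ℂ A]
    [IsScalarTower ℂ A A] [SMulCommClass ℂ A A] [CompleteSpace A]
    -- `A` is weakly amenable
    (hWA : ∀ D : A →L[ℂ] (A →L[ℂ] ℂ),
      (∀ a b c : A, D (a * b) c = D b (c * a) + D a (b * c)) →
      ∃ f : A →L[ℂ] ℂ, ∀ a b : A, D a b = f (b * a - a * b))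
    -- `A` is `I`-weakly amenable for every closed two-sided ideal `I` with
    -- `I` equal to the closed linear span of `{a*i} ∪ {i*a}`
    (hEss : ∀ I : Submodule ℂ A, IsClosed (I : Set A) →
      ∀ hI : (∀ a : A, ∀ x ∈ I, a * x ∈ I ∧ x * a ∈ I),
      (Submodule.span ℂ {x : A | ∃ a : A, ∃ i ∈ I, x = a * i ∨ x = i * a}).topologicalClosure
        = I →
      ∀ D : A →L[ℂ] (↥I →L[ℂ] ℂ),
        (∀ a b : A, ∀ i : ↥I,
          D (a * b) i = D b ⟨(i : A) * a, (hI a i i.2).2⟩ +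
            D a ⟨b * (i : A), (hI b i i.2).1⟩) →
        ∃ f : ↥I →L[ℂ] ℂ, ∀ a : A, ∀ i : ↥I,
          D a i = f ⟨(i : A) * a - a * (i : A),
            I.sub_mem (hI a i i.2).2 (hI a i i.2).1⟩) :
    -- then `A` is ideally amenable
    ∀ I : Submodule ℂ A, IsClosed (I : Set A) →
      ∀ hI : (∀ a : A, ∀ x ∈ I, a * x ∈ I ∧ x * a ∈ I),
      ∀ D : A →L[ℂ] (↥I →L[ℂ] ℂ),
        (∀ a b : A, ∀ i : ↥I,
          D (a * b) i = D b ⟨(i : A) * a, (hI a i i.2).2⟩ +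
            D a ⟨b * (i : A), (hI b i i.2).1⟩) →
        ∃ f : ↥I →L[ℂ] ℂ, ∀ a : A, ∀ i : ↥I,
          D a i = f ⟨(i : A) * a - a * (i : A),
            I.sub_mem (hI a i i.2).2 (hI a i i.2).1⟩ :=
  ideallyAmenable_of_weaklyAmenable_and_essential_ideals_general hWA hEss
end

section
/- Let A be a Banach algebra over ℂ and let J ⊆ I be closed two-sided ideals of A. Suppose: (1) A is J-weakly amenable; and (2) every derivation D from A into I* such that D(a)(j) = 0 for all a ∈ A and j ∈ J is inner via some f ∈ I* vanishing on J (i.e. D(a)(i) = f(ia − ai) with f(j) = 0 for all j ∈ J). Then A is I-weakly amenable. (Condition (2) expresses H¹(A, (I/J)*) = 0.) -/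
/-- Let `J ⊆ I` be closed two-sided ideals of `A`. If `A` is `J`-weakly
amenable and `H¹(A, (I/J)*) = 0` (every derivation into `I*` vanishing on `J` is inner via
a functional vanishing on `J`), then `A` is `I`-weakly amenable. -/
theorem iWeaklyAmenable_of_jWeaklyAmenable_and_quotient
    {A : Type*} [NonUnitalNormedRing A] [NormedSpace ℂ A]
    [IsScalarTower ℂ A A] [SMulCommClass ℂ A A] [CompleteSpace A]
    (I J : Submodule ℂ A) (hJI : J ≤ I)
    (hIclosed : IsClosed (I : Set A)) (hJclosed : IsClosed (J : Set A))
    (hI : ∀ a : A, ∀ x ∈ I, a * x ∈ I ∧ x * a ∈ I)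
    (hJ : ∀ a : A, ∀ x ∈ J, a * x ∈ J ∧ x * a ∈ J)
    -- (1) `A` is `J`-weakly amenable
    (h1 : ∀ D : A →L[ℂ] (↥J →L[ℂ] ℂ),
      (∀ a b : A, ∀ j : ↥J,
        D (a * b) j = D b ⟨(j : A) * a, (hJ a j j.2).2⟩ +
          D a ⟨b * (j : A), (hJ b j j.2).1⟩) →
      ∃ f : ↥J →L[ℂ] ℂ, ∀ a : A, ∀ j : ↥J,
        D a j = f ⟨(j : A) * a - a * (j : A),
          J.sub_mem (hJ a j j.2).2 (hJ a j j.2).1⟩)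
    -- (2) `H¹(A, (I/J)*) = 0`
    (h2 : ∀ D : A →L[ℂ] (↥I →L[ℂ] ℂ),
      (∀ a b : A, ∀ i : ↥I,
        D (a * b) i = D b ⟨(i : A) * a, (hI a i i.2).2⟩ +
          D a ⟨b * (i : A), (hI b i i.2).1⟩) →
      (∀ a : A, ∀ i : ↥I, (i : A) ∈ J → D a i = 0) →
      ∃ f : ↥I →L[ℂ] ℂ, (∀ i : ↥I, (i : A) ∈ J → f i = 0) ∧
        ∀ a : A, ∀ i : ↥I,
          D a i = f ⟨(i : A) * a - a * (i : A),
            I.sub_mem (hI a i i.2).2 (hI a i i.2).1⟩) :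
    -- then `A` is `I`-weakly amenable
    ∀ D : A →L[ℂ] (↥I →L[ℂ] ℂ),
      (∀ a b : A, ∀ i : ↥I,
        D (a * b) i = D b ⟨(i : A) * a, (hI a i i.2).2⟩ +
          D a ⟨b * (i : A), (hI b i i.2).1⟩) →
      ∃ f : ↥I →L[ℂ] ℂ, ∀ a : A, ∀ i : ↥I,
        D a i = f ⟨(i : A) * a - a * (i : A),
          I.sub_mem (hI a i i.2).2 (hI a i i.2).1⟩ := by
  intro D hD
  classical
  -- inclusion J → I as a continuous linear map
  let inc : ↥J →L[ℂ] ↥I :=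
    LinearMap.mkContinuous (Submodule.inclusion hJI) 1 (fun x => by
      simp [Submodule.inclusion])
  have hinc : ∀ j : ↥J, ((inc j : ↥I) : A) = (j : A) := fun j => rfl
  -- restriction of D to J*
  let DJ : A →L[ℂ] (↥J →L[ℂ] ℂ) :=
    ((ContinuousLinearMap.compL ℂ ↥J ↥I ℂ).flip inc).comp D
  have hDJ : ∀ a : A, ∀ j : ↥J, DJ a j = D a ⟨(j : A), hJI j.2⟩ := by
    intro a j
    have : inc j = ⟨(j : A), hJI j.2⟩ := Subtype.ext rfl
    simp [DJ, this]
  have hDJder : ∀ a b : A, ∀ j : ↥J,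
      DJ (a * b) j = DJ b ⟨(j : A) * a, (hJ a j j.2).2⟩ +
        DJ a ⟨b * (j : A), (hJ b j j.2).1⟩ := by
    intro a b j
    rw [hDJ, hDJ, hDJ]
    exact hD a b ⟨(j : A), hJI j.2⟩
  obtain ⟨g, hg⟩ := h1 DJ hDJder
  -- Hahn–Banach extension of g to all of A
  obtain ⟨G, hG, -⟩ := exists_extension_norm_eq J g
  -- the inner derivation attached to G
  let T : A →L[ℂ] (A →L[ℂ] A) :=
    (ContinuousLinearMap.mul ℂ A).flip - ContinuousLinearMap.mul ℂ A
  have hT : ∀ a x : A, T a x = x * a - a * x := fun a x => rfl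
  let adG : A →L[ℂ] (↥I →L[ℂ] ℂ) :=
    (((ContinuousLinearMap.compL ℂ ↥I A ℂ) G).comp
      ((ContinuousLinearMap.compL ℂ ↥I A A).flip I.subtypeL)).comp T
  have hadG : ∀ a : A, ∀ i : ↥I, adG a i = G ((i : A) * a - a * (i : A)) := by
    intro a i; rfl
  -- the corrected derivation
  let D' : A →L[ℂ] (↥I →L[ℂ] ℂ) := D - adG
  have hD' : ∀ a : A, ∀ i : ↥I, D' a i = D a i - G ((i : A) * a - a * (i : A)) := by
    intro a i; simp [D', hadG]
  have hD'der : ∀ a b : A, ∀ i : ↥I,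
      D' (a * b) i = D' b ⟨(i : A) * a, (hI a i i.2).2⟩ +
        D' a ⟨b * (i : A), (hI b i i.2).1⟩ := by
    intro a b i
    rw [hD', hD', hD', hD a b i]
    have : ((i : A) * (a * b) - a * b * (i : A))
        = ((i : A) * a * b - b * ((i : A) * a)) + (b * (i : A) * a - a * (b * (i : A))) := by
      noncomm_ring
    rw [this, map_add]
    ring
  have hD'J : ∀ a : A, ∀ i : ↥I, (i : A) ∈ J → D' a i = 0 := by
    intro a i hiJ
    rw [hD' a i]
    have hDi : D a i = DJ a ⟨(i : A), hiJ⟩ := by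
      rw [hDJ]
    rw [hDi, hg a ⟨(i : A), hiJ⟩]
    exact sub_eq_zero.mpr (hG _).symm
  obtain ⟨f, hfJ, hf⟩ := h2 D' hD'der hD'J
  refine ⟨f + G.comp I.subtypeL, fun a i => ?_⟩
  have := hf a i
  rw [hD' a i] at this
  have hcalc : D a i = f ⟨(i : A) * a - a * (i : A),
      I.sub_mem (hI a i i.2).2 (hI a i i.2).1⟩ + G ((i : A) * a - a * (i : A)) := by
    linear_combination this
  simp only [ContinuousLinearMap.add_apply, ContinuousLinearMap.comp_apply,
    Submodule.coe_subtypeL', Submodule.subtype_apply]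
  rw [hcalc]
end

section
/- Let A be a Banach algebra over ℂ and let I be a closed two-sided ideal of A. Suppose: (1) A is I-weakly amenable; and (2) every derivation D from A into A* such that D(a)(i) = 0 for all a ∈ A and i ∈ I is inner via some f ∈ A* vanishing on I (i.e. D(a)(b) = f(ba − ab) with f(i) = 0 for all i ∈ I). Then A is weakly amenable. (Condition (2) expresses H¹(A, (A/I)*) = 0.) -/
/-- Let `I` be a closed two-sided ideal of `A`. If `A` is `I`-weakly
amenable and `H¹(A, (A/I)*) = 0` (every derivation into `A*` vanishing on `I` is inner via
a functional vanishing on `I`), then `A` is weakly amenable. -/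
theorem weaklyAmenable_of_iWeaklyAmenable_and_quotient
    {A : Type*} [NonUnitalNormedRing A] [NormedSpace ℂ A]
    [IsScalarTower ℂ A A] [SMulCommClass ℂ A A] [CompleteSpace A]
    (I : Submodule ℂ A) (hIclosed : IsClosed (I : Set A))
    (hI : ∀ a : A, ∀ x ∈ I, a * x ∈ I ∧ x * a ∈ I)
    -- (1) `A` is `I`-weakly amenable
    (h1 : ∀ D : A →L[ℂ] (↥I →L[ℂ] ℂ),
      (∀ a b : A, ∀ i : ↥I,
        D (a * b) i = D b ⟨(i : A) * a, (hI a i i.2).2⟩ +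
          D a ⟨b * (i : A), (hI b i i.2).1⟩) →
      ∃ f : ↥I →L[ℂ] ℂ, ∀ a : A, ∀ i : ↥I,
        D a i = f ⟨(i : A) * a - a * (i : A),
          I.sub_mem (hI a i i.2).2 (hI a i i.2).1⟩)
    -- (2) `H¹(A, (A/I)*) = 0`
    (h2 : ∀ D : A →L[ℂ] (A →L[ℂ] ℂ),
      (∀ a b c : A, D (a * b) c = D b (c * a) + D a (b * c)) →
      (∀ a : A, ∀ i ∈ I, D a i = 0) →
      ∃ f : A →L[ℂ] ℂ, (∀ i ∈ I, f i = 0) ∧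
        ∀ a b : A, D a b = f (b * a - a * b)) :
    -- then `A` is weakly amenable
    ∀ D : A →L[ℂ] (A →L[ℂ] ℂ),
      (∀ a b c : A, D (a * b) c = D b (c * a) + D a (b * c)) →
      ∃ f : A →L[ℂ] ℂ, ∀ a b : A, D a b = f (b * a - a * b) := by
  intro D hD
  -- restrict D to a derivation into I*
  let D₁ : A →L[ℂ] (↥I →L[ℂ] ℂ) :=
    ((ContinuousLinearMap.compL ℂ ↥I A ℂ).flip I.subtypeL).comp D
  have hD₁ : ∀ a b : A, ∀ i : ↥I,
      D₁ (a * b) i = D₁ b ⟨(i : A) * a, (hI a i i.2).2⟩ +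
        D₁ a ⟨b * (i : A), (hI b i i.2).1⟩ := by
    intro a b i
    simpa [D₁] using hD a b (i : A)
  obtain ⟨f, hf⟩ := h1 D₁ hD₁
  obtain ⟨F, hF, -⟩ := exists_extension_norm_eq I f
  -- the inner derivation given by F
  let E : A →L[ℂ] (A →L[ℂ] ℂ) :=
    ((ContinuousLinearMap.compL ℂ A A ℂ) F).comp
      ((ContinuousLinearMap.mul ℂ A).flip - ContinuousLinearMap.mul ℂ A)
  have hE : ∀ a b : A, E a b = F (b * a - a * b) := by
    intro a b
    simp [E]
  let D₂ : A →L[ℂ] (A →L[ℂ] ℂ) := D - E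
  have hD₂ : ∀ a b c : A, D₂ (a * b) c = D₂ b (c * a) + D₂ a (b * c) := by
    intro a b c
    have := hD a b c
    simp only [D₂, ContinuousLinearMap.sub_apply, hE, map_sub, this]
    simp [mul_assoc]
    ring
  have hD₂0 : ∀ a : A, ∀ i ∈ I, D₂ a i = 0 := by
    intro a i hi
    have h1' := hf a ⟨i, hi⟩
    have h2' := hF (⟨i * a - a * i, I.sub_mem (hI a i hi).2 (hI a i hi).1⟩ : ↥I)
    simp only [D₂, ContinuousLinearMap.sub_apply, hE]
    rw [show D a i = _ from h1']
    rw [← h2']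
    exact sub_self _
  obtain ⟨g, hgI, hg⟩ := h2 D₂ hD₂ hD₂0
  refine ⟨F + g, fun a b => ?_⟩
  have : D a b = D₂ a b + E a b := by
    simp [D₂]
  rw [this, hg a b, hE a b, ContinuousLinearMap.add_apply]
  ring
end

section
/- Let A be an ideally amenable Banach algebra over ℂ and let I be a closed two-sided ideal of A with the trace extension property: every f ∈ I* satisfying f(ia) = f(ai) for all a ∈ A and i ∈ I extends to some g ∈ A* satisfying g(ba) = g(ab) for all a, b ∈ A. Then A/I is ideally amenable; concretely, for every closed two-sided ideal J of A with I ⊆ J, every derivation D from A into J* such that D(i) = 0 for all i ∈ I and D(a)(i) = 0 for all a ∈ A, i ∈ I, is inner via some f ∈ J* vanishing on I (i.e. D(a)(j) = f(ja − aj) with f(i) = 0 for all i ∈ I). (Such D correspond exactly to the derivations from A/I into (J/I)*.) -/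
/-- If `A` is ideally amenable and the closed two-sided ideal `I` has the
trace extension property, then `A/I` is ideally amenable: for every closed two-sided ideal
`J ⊇ I` of `A`, every derivation `D : A → J*` with `D(i) = 0` for `i ∈ I` and
`D(a)(i) = 0` for `a ∈ A`, `i ∈ I` is inner via a functional vanishing on `I`. -/
theorem quotient_ideallyAmenable_of_traceExtension
    {A : Type*} [NonUnitalNormedRing A] [NormedSpace ℂ A]
    [IsScalarTower ℂ A A] [SMulCommClass ℂ A A] [CompleteSpace A]
    -- `A` is ideally amenable
    (hAmen : ∀ K : Submodule ℂ A, IsClosed (K : Set A) →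
      ∀ hK : (∀ a : A, ∀ x ∈ K, a * x ∈ K ∧ x * a ∈ K),
      ∀ D : A →L[ℂ] (↥K →L[ℂ] ℂ),
        (∀ a b : A, ∀ k : ↥K,
          D (a * b) k = D b ⟨(k : A) * a, (hK a k k.2).2⟩ +
            D a ⟨b * (k : A), (hK b k k.2).1⟩) →
        ∃ f : ↥K →L[ℂ] ℂ, ∀ a : A, ∀ k : ↥K,
          D a k = f ⟨(k : A) * a - a * (k : A),
            K.sub_mem (hK a k k.2).2 (hK a k k.2).1⟩)
    -- `I` is a closed two-sided ideal of `A`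
    (I : Submodule ℂ A) (hIclosed : IsClosed (I : Set A))
    (hI : ∀ a : A, ∀ x ∈ I, a * x ∈ I ∧ x * a ∈ I)
    -- with the trace extension property
    (hTEP : ∀ f : ↥I →L[ℂ] ℂ,
      (∀ a : A, ∀ i : ↥I, f ⟨(i : A) * a, (hI a i i.2).2⟩ = f ⟨a * (i : A), (hI a i i.2).1⟩) →
      ∃ g : A →L[ℂ] ℂ, (∀ i : ↥I, g (i : A) = f i) ∧ ∀ a b : A, g (b * a) = g (a * b)) :
    -- then `A/I` is ideally amenable
    ∀ J : Submodule ℂ A, I ≤ J → IsClosed (J : Set A) →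
      ∀ hJ : (∀ a : A, ∀ x ∈ J, a * x ∈ J ∧ x * a ∈ J),
      ∀ D : A →L[ℂ] (↥J →L[ℂ] ℂ),
        (∀ a b : A, ∀ j : ↥J,
          D (a * b) j = D b ⟨(j : A) * a, (hJ a j j.2).2⟩ +
            D a ⟨b * (j : A), (hJ b j j.2).1⟩) →
        (∀ i ∈ I, D i = 0) →
        (∀ a : A, ∀ j : ↥J, (j : A) ∈ I → D a j = 0) →
        ∃ f : ↥J →L[ℂ] ℂ, (∀ j : ↥J, (j : A) ∈ I → f j = 0) ∧
          ∀ a : A, ∀ j : ↥J,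
            D a j = f ⟨(j : A) * a - a * (j : A),
              J.sub_mem (hJ a j j.2).2 (hJ a j j.2).1⟩ := by
  intro J hIJ hJclosed hJ D hDer _hD1 hD2
  obtain ⟨f₀, hf₀⟩ := hAmen J hJclosed hJ D hDer
  -- restrict f₀ to I
  have hcont : Continuous fun i : ↥I => (⟨(i : A), hIJ i.2⟩ : ↥J) :=
    Continuous.subtype_mk continuous_subtype_val _
  set h : ↥I →L[ℂ] ℂ :=
    { toLinearMap := f₀.toLinearMap.comp (Submodule.inclusion hIJ)
      cont := f₀.continuous.comp hcont } with hh
  have hhval : ∀ i : ↥I, h i = f₀ ⟨(i : A), hIJ i.2⟩ := fun i => rfl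
  have htrace : ∀ a : A, ∀ i : ↥I,
      h ⟨(i : A) * a, (hI a i i.2).2⟩ = h ⟨a * (i : A), (hI a i i.2).1⟩ := by
    intro a i
    have h1 := hf₀ a ⟨(i : A), hIJ i.2⟩
    have h2 := hD2 a ⟨(i : A), hIJ i.2⟩ i.2
    rw [h2] at h1
    have : f₀ ⟨(i : A) * a - a * (i : A), J.sub_mem (hJ a _ (hIJ i.2)).2 (hJ a _ (hIJ i.2)).1⟩
        = 0 := h1.symm
    have hsub : (⟨(i : A) * a - a * (i : A),
        J.sub_mem (hJ a _ (hIJ i.2)).2 (hJ a _ (hIJ i.2)).1⟩ : ↥J)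
        = ⟨(i : A) * a, hIJ (hI a i i.2).2⟩ - ⟨a * (i : A), hIJ (hI a i i.2).1⟩ := rfl
    rw [hsub, map_sub] at this
    simp only [hhval]
    exact sub_eq_zero.mp this
  obtain ⟨g, hg1, hg2⟩ := hTEP h htrace
  refine ⟨f₀ - g.comp J.subtypeL, ?_, ?_⟩
  · intro j hjI
    have := hg1 ⟨(j : A), hjI⟩
    simp only [ContinuousLinearMap.sub_apply, ContinuousLinearMap.comp_apply,
      Submodule.subtypeL_apply]
    rw [this, hhval]
    simp
  · intro a j
    have h1 := hf₀ a j
    simp only [ContinuousLinearMap.sub_apply, ContinuousLinearMap.comp_apply,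
      Submodule.subtypeL_apply]
    rw [h1]
    have : g ((j : A) * a - a * (j : A)) = 0 := by
      rw [map_sub, hg2 a (j : A), sub_self]
    rw [this, sub_zero]
end

section
/- Let A be a Banach algebra over ℂ and let J be a closed two-sided ideal of A with a bounded two-sided approximate identity (a norm-bounded net (j_α) in J with ‖j_α x − x‖ → 0 and ‖x j_α − x‖ → 0 for every x ∈ J). Let I be a closed two-sided ideal of A contained in J (so I is in particular a closed two-sided ideal of the Banach algebra J). Then J is I-weakly amenable if and only if A is I-weakly amenable: every derivation from J into I* is inner if and only if every derivation from A into I* is inner. -/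
set_option maxSynthPendingDepth 3
set_option maxHeartbeats 1000000


/-- Let `J` be a closed two-sided ideal of `A` with a bounded two-sided
approximate identity and let `I ⊆ J` be a closed two-sided ideal of `A`. Then `J` is
`I`-weakly amenable if and only if `A` is `I`-weakly amenable. -/
theorem ideal_iWeaklyAmenable_iff_algebra_iWeaklyAmenable
    {A : Type*} [NonUnitalNormedRing A] [NormedSpace ℂ A]
    [IsScalarTower ℂ A A] [SMulCommClass ℂ A A] [CompleteSpace A]
    -- `J` is a closed two-sided ideal of `A`
    (J : Submodule ℂ A) (hJclosed : IsClosed (J : Set A))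
    (hJ : ∀ a : A, ∀ x ∈ J, a * x ∈ J ∧ x * a ∈ J)
    -- with a bounded two-sided approximate identity (a bounded net)
    (hbai : ∃ (ι : Type) (l : Filter ι) (_ : l.NeBot) (e : ι → A) (C : ℝ),
      (∀ α, e α ∈ J) ∧ (∀ α, ‖e α‖ ≤ C) ∧
      ∀ x ∈ J, Filter.Tendsto (fun α => ‖e α * x - x‖) l (nhds 0) ∧
        Filter.Tendsto (fun α => ‖x * e α - x‖) l (nhds 0))
    -- `I` is a closed two-sided ideal of `A` contained in `J`
    (I : Submodule ℂ A) (hIJ : I ≤ J) (hIclosed : IsClosed (I : Set A))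
    (hI : ∀ a : A, ∀ x ∈ I, a * x ∈ I ∧ x * a ∈ I) :
    -- `J` is `I`-weakly amenable iff `A` is `I`-weakly amenable
    (∀ D : ↥J →L[ℂ] (↥I →L[ℂ] ℂ),
      (∀ x y : ↥J, ∀ i : ↥I,
        D ⟨(x : A) * (y : A), (hJ x y y.2).1⟩ i =
          D y ⟨(i : A) * (x : A), (hI x i i.2).2⟩ +
          D x ⟨(y : A) * (i : A), (hI y i i.2).1⟩) →
      ∃ f : ↥I →L[ℂ] ℂ, ∀ x : ↥J, ∀ i : ↥I,
        D x i = f ⟨(i : A) * (x : A) - (x : A) * (i : A),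
          I.sub_mem (hI x i i.2).2 (hI x i i.2).1⟩) ↔
    (∀ D : A →L[ℂ] (↥I →L[ℂ] ℂ),
      (∀ a b : A, ∀ i : ↥I,
        D (a * b) i = D b ⟨(i : A) * a, (hI a i i.2).2⟩ +
          D a ⟨b * (i : A), (hI b i i.2).1⟩) →
      ∃ f : ↥I →L[ℂ] ℂ, ∀ a : A, ∀ i : ↥I,
        D a i = f ⟨(i : A) * a - a * (i : A),
          I.sub_mem (hI a i i.2).2 (hI a i i.2).1⟩) := by
  classical
  obtain ⟨ι, l, hl, e, C, heJ, heC, happ⟩ := hbai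
  haveI : l.NeBot := hl
  haveI : Nonempty ι := Filter.nonempty_of_neBot l
  have hC0 : (0:ℝ) ≤ C := le_trans (norm_nonneg _) (heC (Classical.arbitrary ι))
  have heL : ∀ x ∈ J, Filter.Tendsto (fun α => e α * x) l (nhds x) := fun x hx =>
    tendsto_iff_norm_sub_tendsto_zero.2 (happ x hx).1
  have heR : ∀ x ∈ J, Filter.Tendsto (fun α => x * e α) l (nhds x) := fun x hx =>
    tendsto_iff_norm_sub_tendsto_zero.2 (happ x hx).2
  constructor
  · -- J `I`-weakly amenable → A `I`-weakly amenable
    intro hJwa D hD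
    obtain ⟨f, hf⟩ := hJwa (D.comp J.subtypeL) (by
      intro x y i
      simpa using hD (x : A) (y : A) i)
    refine ⟨f, fun a i => ?_⟩
    -- evaluate along the approximate identity
    have h1 : Filter.Tendsto
        (fun α => D a ⟨e α * (i : A), (hI (e α) i i.2).1⟩) l (nhds (D a i)) := by
      refine ((D a).continuous.tendsto i).comp (tendsto_subtype_rng.2 ?_)
      exact heL (i : A) (hIJ i.2)
    have h2 : ∀ α, D a ⟨e α * (i : A), (hI (e α) i i.2).1⟩ =
        f ⟨e α * (i : A) * a - a * (e α * (i : A)),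
          I.sub_mem (hI a (e α * (i:A)) ((hI (e α) i i.2).1)).2
            (hI a (e α * (i:A)) ((hI (e α) i i.2).1)).1⟩ := by
      intro α
      have hder := hD a (e α) i
      have hf1 : D (a * e α) i = f ⟨(i : A) * (a * e α) - a * e α * (i : A),
          I.sub_mem (hI (a * e α) i i.2).2 (hI (a * e α) i i.2).1⟩ :=
        hf ⟨a * e α, (hJ a (e α) (heJ α)).1⟩ i
      have hf2 : D (e α) ⟨(i : A) * a, (hI a i i.2).2⟩ =
          f ⟨(i : A) * a * e α - e α * ((i : A) * a),
            I.sub_mem (hI (e α) ((i : A) * a) ((hI a i i.2).2)).2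
              (hI (e α) ((i : A) * a) ((hI a i i.2).2)).1⟩ :=
        hf ⟨e α, heJ α⟩ ⟨(i : A) * a, (hI a i i.2).2⟩
      have hsub : f (⟨(i : A) * (a * e α) - a * e α * (i : A),
            I.sub_mem (hI (a * e α) i i.2).2 (hI (a * e α) i i.2).1⟩ : ↥I) -
          f ⟨(i : A) * a * e α - e α * ((i : A) * a),
            I.sub_mem (hI (e α) ((i : A) * a) ((hI a i i.2).2)).2
              (hI (e α) ((i : A) * a) ((hI a i i.2).2)).1⟩ =
          f ⟨e α * (i : A) * a - a * (e α * (i : A)),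
            I.sub_mem (hI a (e α * (i:A)) ((hI (e α) i i.2).1)).2
              (hI a (e α * (i:A)) ((hI (e α) i i.2).1)).1⟩ := by
        rw [← map_sub]
        refine congrArg f (Subtype.ext ?_)
        simp only [AddSubgroupClass.coe_sub]
        simp only [mul_assoc]
        abel
      linear_combination hf1 - hf2 - hder + hsub
    have h3 : Filter.Tendsto
        (fun α => f ⟨e α * (i : A) * a - a * (e α * (i : A)),
          I.sub_mem (hI a (e α * (i:A)) ((hI (e α) i i.2).1)).2
            (hI a (e α * (i:A)) ((hI (e α) i i.2).1)).1⟩) l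
        (nhds (f ⟨(i : A) * a - a * (i : A),
          I.sub_mem (hI a i i.2).2 (hI a i i.2).1⟩)) := by
      refine (f.continuous.tendsto _).comp (tendsto_subtype_rng.2 ?_)
      have hei : Filter.Tendsto (fun α => e α * (i : A)) l (nhds (i : A)) :=
        heL (i : A) (hIJ i.2)
      exact (hei.mul_const a).sub (tendsto_const_nhds.mul hei)
    exact tendsto_nhds_unique (h1.congr h2) h3
  · -- A `I`-weakly amenable → J `I`-weakly amenable
    intro hA D hD
    set K : ℝ := 2 * ‖D‖ * C with hK
    have hK0 : 0 ≤ K := by rw [hK]; positivity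
    let U : Ultrafilter ι := Ultrafilter.of l
    have hUl : (U : Filter ι) ≤ l := Ultrafilter.of_le l
    have ulim : ∀ g : ι → ℂ, (∃ M, ∀ α, ‖g α‖ ≤ M) →
        ∃ z, Filter.Tendsto g (U : Filter ι) (nhds z) := by
      rintro g ⟨M, hM⟩
      obtain ⟨z, -, hz⟩ := (isCompact_closedBall (0:ℂ) M).ultrafilter_le_nhds (U.map g) (by
        rw [Ultrafilter.coe_map, Filter.le_principal_iff, Filter.mem_map]
        filter_upwards [] with n using by
          simpa [Metric.mem_closedBall, dist_eq_norm] using hM n)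
      exact ⟨z, by rwa [Ultrafilter.coe_map] at hz⟩
    -- the net defining the extension
    have hGbound : ∀ (a : A) (i : ↥I) (α : ι),
        ‖D ⟨a * e α, (hJ a (e α) (heJ α)).1⟩ i -
          D ⟨e α, heJ α⟩ ⟨(i : A) * a, (hI a i i.2).2⟩‖ ≤ K * ‖a‖ * ‖i‖ := by
      intro a i α
      have hb1 : ‖D ⟨a * e α, (hJ a (e α) (heJ α)).1⟩ i‖ ≤ ‖D‖ * (‖a‖ * C) * ‖i‖ := by
        refine le_trans (D.le_opNorm₂ _ i) ?_
        have : ‖(⟨a * e α, (hJ a (e α) (heJ α)).1⟩ : ↥J)‖ ≤ ‖a‖ * C :=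
          le_trans (norm_mul_le a (e α)) (by
            exact mul_le_mul_of_nonneg_left (heC α) (norm_nonneg a))
        exact mul_le_mul_of_nonneg_right (mul_le_mul_of_nonneg_left this (norm_nonneg D))
          (norm_nonneg i)
      have hb2 : ‖D ⟨e α, heJ α⟩ ⟨(i : A) * a, (hI a i i.2).2⟩‖ ≤ ‖D‖ * C * (‖i‖ * ‖a‖) := by
        refine le_trans (D.le_opNorm₂ _ _) ?_
        have h1 : ‖(⟨e α, heJ α⟩ : ↥J)‖ ≤ C := heC α
        have h2 : ‖(⟨(i : A) * a, (hI a i i.2).2⟩ : ↥I)‖ ≤ ‖i‖ * ‖a‖ :=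
          norm_mul_le (i : A) a
        have := mul_le_mul (mul_le_mul_of_nonneg_left h1 (norm_nonneg D)) h2
          (norm_nonneg _) (by positivity)
        exact this
      calc ‖D ⟨a * e α, (hJ a (e α) (heJ α)).1⟩ i -
          D ⟨e α, heJ α⟩ ⟨(i : A) * a, (hI a i i.2).2⟩‖
          ≤ ‖D ⟨a * e α, (hJ a (e α) (heJ α)).1⟩ i‖ +
            ‖D ⟨e α, heJ α⟩ ⟨(i : A) * a, (hI a i i.2).2⟩‖ := norm_sub_le _ _
        _ ≤ ‖D‖ * (‖a‖ * C) * ‖i‖ + ‖D‖ * C * (‖i‖ * ‖a‖) := add_le_add hb1 hb2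
        _ = K * ‖a‖ * ‖i‖ := by rw [hK]; ring
    have hex : ∀ (a : A) (i : ↥I), ∃ z, Filter.Tendsto
        (fun α => D ⟨a * e α, (hJ a (e α) (heJ α)).1⟩ i -
          D ⟨e α, heJ α⟩ ⟨(i : A) * a, (hI a i i.2).2⟩) (U : Filter ι) (nhds z) :=
      fun a i => ulim _ ⟨K * ‖a‖ * ‖i‖, hGbound a i⟩
    choose φ hφ using hex
    have huniq : ∀ (a : A) (i : ↥I) (z : ℂ), Filter.Tendsto
        (fun α => D ⟨a * e α, (hJ a (e α) (heJ α)).1⟩ i -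
          D ⟨e α, heJ α⟩ ⟨(i : A) * a, (hI a i i.2).2⟩) (U : Filter ι) (nhds z) →
        φ a i = z := fun a i z h => tendsto_nhds_unique (hφ a i) h
    -- bound on φ
    have hφbound : ∀ (a : A) (i : ↥I), ‖φ a i‖ ≤ K * ‖a‖ * ‖i‖ := fun a i =>
      le_of_tendsto' (hφ a i).norm (hGbound a i)
    -- additivity of φ in the second variable
    have hφaddi : ∀ (a : A) (i i' : ↥I), φ a (i + i') = φ a i + φ a i' := by
      intro a i i'
      apply huniq
      refine ((hφ a i).add (hφ a i')).congr fun α => ?_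
      have h' : (⟨((i + i' : ↥I) : A) * a, (hI a (i + i') (i + i').2).2⟩ : ↥I)
          = ⟨(i : A) * a, (hI a i i.2).2⟩ + ⟨(i' : A) * a, (hI a i' i'.2).2⟩ :=
        Subtype.ext (by simp [add_mul])
      rw [h', map_add, map_add]
      ring
    -- `ℂ`-homogeneity of φ in the second variable
    have hφsmuli : ∀ (a : A) (c : ℂ) (i : ↥I), φ a (c • i) = c * φ a i := by
      intro a c i
      apply huniq
      refine ((hφ a i).const_mul c).congr fun α => ?_
      have h' : (⟨((c • i : ↥I) : A) * a, (hI a (c • i) (c • i).2).2⟩ : ↥I)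
          = c • ⟨(i : A) * a, (hI a i i.2).2⟩ :=
        Subtype.ext (by simp [smul_mul_assoc])
      rw [h', map_smul, map_smul, smul_eq_mul, smul_eq_mul]
      ring
    -- additivity of φ in the first variable
    have hφadda : ∀ (a a' : A) (i : ↥I), φ (a + a') i = φ a i + φ a' i := by
      intro a a' i
      apply huniq
      refine ((hφ a i).add (hφ a' i)).congr fun α => ?_
      have h1 : (⟨(a + a') * e α, (hJ (a + a') (e α) (heJ α)).1⟩ : ↥J)
          = ⟨a * e α, (hJ a (e α) (heJ α)).1⟩ + ⟨a' * e α, (hJ a' (e α) (heJ α)).1⟩ :=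
        Subtype.ext (by simp [add_mul])
      have h2 : (⟨(i : A) * (a + a'), (hI (a + a') i i.2).2⟩ : ↥I)
          = ⟨(i : A) * a, (hI a i i.2).2⟩ + ⟨(i : A) * a', (hI a' i i.2).2⟩ :=
        Subtype.ext (by simp [mul_add])
      rw [h1, h2, map_add, map_add, ContinuousLinearMap.add_apply]
      ring
    -- `ℂ`-homogeneity of φ in the first variable
    have hφsmula : ∀ (a : A) (c : ℂ) (i : ↥I), φ (c • a) i = c * φ a i := by
      intro a c i
      apply huniq
      refine ((hφ a i).const_mul c).congr fun α => ?_
      have h1 : (⟨(c • a) * e α, (hJ (c • a) (e α) (heJ α)).1⟩ : ↥J)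
          = c • ⟨a * e α, (hJ a (e α) (heJ α)).1⟩ :=
        Subtype.ext (by simp [smul_mul_assoc])
      have h2 : (⟨(i : A) * (c • a), (hI (c • a) i i.2).2⟩ : ↥I)
          = c • ⟨(i : A) * a, (hI a i i.2).2⟩ :=
        Subtype.ext (by simp [mul_smul_comm])
      rw [h1, h2, map_smul, map_smul, ContinuousLinearMap.smul_apply, smul_eq_mul,
        smul_eq_mul]
      ring
    -- φ extends D
    have hext : ∀ (x : ↥J) (i : ↥I), φ (x : A) i = D x i := by
      intro x i
      apply huniq
      have h1 : Filter.Tendsto (fun α => D x ⟨e α * (i : A), (hI (e α) i i.2).1⟩) l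
          (nhds (D x i)) :=
        ((D x).continuous.tendsto i).comp (tendsto_subtype_rng.2 (heL (i : A) (hIJ i.2)))
      refine (h1.mono_left hUl).congr fun α => ?_
      have hder : D ⟨(x : A) * e α, (hJ (x : A) (e α) (heJ α)).1⟩ i =
          D ⟨e α, heJ α⟩ ⟨(i : A) * (x : A), (hI (x : A) i i.2).2⟩ +
            D x ⟨e α * (i : A), (hI (e α) i i.2).1⟩ :=
        hD x ⟨e α, heJ α⟩ i
      linear_combination -hder
    -- key formula : φ a (j * y) = D (a * j) y - D j (y * a)
    have hstar : ∀ (a : A) (j : ↥J) (y : ↥I),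
        φ a ⟨(j : A) * (y : A), (hI (j : A) y y.2).1⟩ =
          D ⟨a * (j : A), (hJ a (j : A) j.2).1⟩ y - D j ⟨(y : A) * a, (hI a y y.2).2⟩ := by
      intro a j y
      apply huniq
      have t1 : Filter.Tendsto
          (fun α => D ⟨a * e α * (j : A), (hJ (a * e α) (j : A) j.2).1⟩ y) l
          (nhds (D ⟨a * (j : A), (hJ a (j : A) j.2).1⟩ y)) := by
        refine ((ContinuousLinearMap.apply ℂ ℂ y).continuous.tendsto _).comp
          ((D.continuous.tendsto _).comp (tendsto_subtype_rng.2 ?_))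
        exact ((heL (j : A) j.2).const_mul a).congr fun α => (mul_assoc a (e α) (j : A)).symm
      have t2 : Filter.Tendsto
          (fun α => D ⟨e α * (j : A), (hJ (e α) (j : A) j.2).1⟩
            ⟨(y : A) * a, (hI a y y.2).2⟩) l
          (nhds (D j ⟨(y : A) * a, (hI a y y.2).2⟩)) := by
        refine ((ContinuousLinearMap.apply ℂ ℂ _).continuous.tendsto _).comp
          ((D.continuous.tendsto _).comp (tendsto_subtype_rng.2 ?_))
        exact heL (j : A) j.2
      refine ((t1.sub t2).mono_left hUl).congr fun α => ?_
      have h1 : D ⟨a * e α * (j : A), (hJ (a * e α) (j : A) j.2).1⟩ y =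
          D j ⟨(y : A) * (a * e α), (hI (a * e α) y y.2).2⟩ +
            D ⟨a * e α, (hJ a (e α) (heJ α)).1⟩
              ⟨(j : A) * (y : A), (hI (j : A) y y.2).1⟩ :=
        hD ⟨a * e α, (hJ a (e α) (heJ α)).1⟩ j y
      have h2 : D ⟨e α * (j : A), (hJ (e α) (j : A) j.2).1⟩ ⟨(y : A) * a, (hI a y y.2).2⟩ =
          D j ⟨(y : A) * a * e α,
              (hI (e α) ((y : A) * a) ((hI a y y.2).2)).2⟩ +
            D ⟨e α, heJ α⟩ ⟨(j : A) * ((y : A) * a),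
              (hI (j : A) ((y : A) * a) ((hI a y y.2).2)).1⟩ :=
        hD ⟨e α, heJ α⟩ j ⟨(y : A) * a, (hI a y y.2).2⟩
      have c1 : D j (⟨(y : A) * (a * e α), (hI (a * e α) y y.2).2⟩ : ↥I)
          = D j ⟨(y : A) * a * e α,
              (hI (e α) ((y : A) * a) ((hI a y y.2).2)).2⟩ :=
        congrArg (D j) (Subtype.ext (mul_assoc _ _ _).symm)
      have c2 : D (⟨e α, heJ α⟩ : ↥J) (⟨(j : A) * ((y : A) * a),
              (hI (j : A) ((y : A) * a) ((hI a y y.2).2)).1⟩ : ↥I)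
          = D ⟨e α, heJ α⟩ ⟨(j : A) * (y : A) * a,
              (hI a ((j : A) * (y : A)) ((hI (j : A) y y.2).1)).2⟩ :=
        congrArg (D ⟨e α, heJ α⟩) (Subtype.ext (mul_assoc _ _ _).symm)
      linear_combination h1 - h2 + c1 - c2
    -- Lipschitz continuity of φ in the second variable
    have hcont : ∀ (c : A) (v : ι → ↥I) (vL : ↥I),
        Filter.Tendsto (fun β => ((v β : A))) l (nhds (vL : A)) →
        Filter.Tendsto (fun β => φ c (v β)) l (nhds (φ c vL)) := by
      intro c v vL hv
      refine tendsto_iff_norm_sub_tendsto_zero.2 ?_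
      have hb : ∀ β, ‖φ c (v β) - φ c vL‖ ≤ K * ‖c‖ * ‖v β - vL‖ := by
        intro β
        have h1 : φ c (v β) - φ c vL = φ c (v β - vL) := by
          have h2 := hφaddi c (v β - vL) vL
          rw [sub_add_cancel] at h2
          linear_combination h2
        rw [h1]
        exact hφbound c _
      refine squeeze_zero (fun β => norm_nonneg _) hb ?_
      have h3 : Filter.Tendsto (fun β => ‖v β - vL‖) l (nhds 0) :=
        tendsto_iff_norm_sub_tendsto_zero.1 (tendsto_subtype_rng.2 hv)
      have h4 := h3.const_mul (K * ‖c‖)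
      rw [mul_zero] at h4
      exact h4
    -- the derivation identity for φ
    have hder5 : ∀ (a b : A) (i : ↥I), φ (a * b) i =
        φ b ⟨(i : A) * a, (hI a i i.2).2⟩ + φ a ⟨b * (i : A), (hI b i i.2).1⟩ := by
      intro a b i
      have key : ∀ β : ι, φ (a * b) ⟨e β * (i : A), (hI (e β) i i.2).1⟩ =
          φ b ⟨(e β * (i : A)) * a,
            (hI a (e β * (i : A)) ((hI (e β) i i.2).1)).2⟩ +
          φ a ⟨b * (e β * (i : A)),
            (hI b (e β * (i : A)) ((hI (e β) i i.2).1)).1⟩ := by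
        intro β
        have E1 := hstar (a * b) ⟨e β, heJ β⟩ i
        have E2 := hstar b ⟨e β, heJ β⟩ ⟨(i : A) * a, (hI a i i.2).2⟩
        have E3 := hstar a ⟨b * e β, (hJ b (e β) (heJ β)).1⟩ i
        have c1 : φ b (⟨(e β * (i : A)) * a,
              (hI a (e β * (i : A)) ((hI (e β) i i.2).1)).2⟩ : ↥I)
            = φ b ⟨e β * ((i : A) * a),
              (hI (e β) ((i : A) * a) ((hI a i i.2).2)).1⟩ :=
          congrArg (φ b) (Subtype.ext (mul_assoc _ _ _))
        have c2 : φ a (⟨b * (e β * (i : A)),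
              (hI b (e β * (i : A)) ((hI (e β) i i.2).1)).1⟩ : ↥I)
            = φ a ⟨(b * e β) * (i : A), (hI (b * e β) i i.2).1⟩ :=
          congrArg (φ a) (Subtype.ext (mul_assoc _ _ _).symm)
        have c3 : D (⟨e β, heJ β⟩ : ↥J) (⟨(i : A) * (a * b), (hI (a * b) i i.2).2⟩ : ↥I)
            = D ⟨e β, heJ β⟩ ⟨((i : A) * a) * b,
              (hI b ((i : A) * a) ((hI a i i.2).2)).2⟩ :=
          congrArg (D ⟨e β, heJ β⟩) (Subtype.ext (mul_assoc _ _ _).symm)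
        have c4 : D (⟨(a * b) * e β, (hJ (a * b) (e β) (heJ β)).1⟩ : ↥J) i
            = D ⟨a * (b * e β), (hJ a (b * e β) ((hJ b (e β) (heJ β)).1)).1⟩ i :=
          congrArg (fun x => D x i) (Subtype.ext (mul_assoc _ _ _))
        linear_combination E1 - E2 - E3 - c1 - c2 + c4 - c3
      have L1 : Filter.Tendsto (fun β => φ (a * b) ⟨e β * (i : A), (hI (e β) i i.2).1⟩) l
          (nhds (φ (a * b) i)) := hcont (a * b) _ i (heL (i : A) (hIJ i.2))
      have L2 : Filter.Tendsto (fun β => φ b ⟨(e β * (i : A)) * a,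
            (hI a (e β * (i : A)) ((hI (e β) i i.2).1)).2⟩) l
          (nhds (φ b ⟨(i : A) * a, (hI a i i.2).2⟩)) :=
        hcont b _ _ ((heL (i : A) (hIJ i.2)).mul_const a)
      have L3 : Filter.Tendsto (fun β => φ a ⟨b * (e β * (i : A)),
            (hI b (e β * (i : A)) ((hI (e β) i i.2).1)).1⟩) l
          (nhds (φ a ⟨b * (i : A), (hI b i i.2).1⟩)) :=
        hcont a _ _ ((heL (i : A) (hIJ i.2)).const_mul b)
      exact tendsto_nhds_unique (L1.congr key) (L2.add L3)
    -- bundle φ into a continuous linear map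
    let Dlin : A → (↥I →L[ℂ] ℂ) := fun a => LinearMap.mkContinuous
      { toFun := fun i => φ a i
        map_add' := fun i i' => hφaddi a i i'
        map_smul' := fun c i => hφsmuli a c i }
      (K * ‖a‖) (fun i => hφbound a i)
    have hDlin : ∀ a i, Dlin a i = φ a i := fun a i => rfl
    let Dt : A →L[ℂ] (↥I →L[ℂ] ℂ) := LinearMap.mkContinuous
      { toFun := Dlin
        map_add' := fun a a' => ContinuousLinearMap.ext fun i => by
          simp only [ContinuousLinearMap.add_apply, hDlin]
          exact hφadda a a' i
        map_smul' := fun c a => ContinuousLinearMap.ext fun i => by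
          simp only [ContinuousLinearMap.smul_apply, RingHom.id_apply, smul_eq_mul, hDlin]
          exact hφsmula a c i }
      K (fun a => LinearMap.mkContinuous_norm_le
        { toFun := fun i => φ a i
          map_add' := fun i i' => hφaddi a i i'
          map_smul' := fun c i => hφsmuli a c i }
        (mul_nonneg hK0 (norm_nonneg a)) (fun i => hφbound a i))
    have hDt : ∀ a i, Dt a i = φ a i := fun a i => rfl
    obtain ⟨f, hf⟩ := hA Dt (fun a b i => by
      simp only [hDt]
      exact hder5 a b i)
    refine ⟨f, fun x i => ?_⟩
    have h := hf (x : A) i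
    rw [hDt] at h
    rw [← hext x i]
    exact h
end

section
/- Let A be a Banach algebra over ℂ and let A# = A ⊕ ℂ1 be its unitization, the unital Banach algebra of pairs a + λ1 (a ∈ A, λ ∈ ℂ) with product (a + λ1)(b + μ1) = (ab + λb + μa) + λμ1 and norm ‖a + λ1‖ = ‖a‖ + |λ|. Then A is ideally amenable if and only if A# is ideally amenable. -/
/-!
Let `𝔄 = A ⊕ ℂ1`. A closed ideal `I` of `A` is also a closed ideal of `𝔄`, and a derivation
`A → I*` extends to `𝔄` by killing `1`; so innerness over `𝔄` restricts to innerness over `A`.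

Conversely, let `I` be a closed ideal of `𝔄` and `D : 𝔄 → I*` a derivation. Then `J = I ∩ A` is
a closed ideal of `A`, and `D` restricted to `A × J` is implemented by some `g ∈ J*`. Extend `g` to
`I` through a continuous retraction `I → J` (`I` is `J` or `J ⊕ ℂe` with `e` of scalar part `1`),
and let `D'` be the inner derivation it defines. `D - D'` vanishes on `1` and on `A × J`, and for
`e ∈ I` of scalar part `1` the functional `a ↦ (D - D') a e` on `A` kills all products, since
`e a, b e ∈ J`. Weak amenability of `A` forces such a functional to vanish, so `D = D'`.
-/

open ContinuousLinearMap

section Derivations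

variable {B : Type*} [NonUnitalNormedRing B] [NormedSpace ℂ B]

def IsTwoSidedIdeal (I : Submodule ℂ B) : Prop :=
  ∀ a : B, ∀ x ∈ I, a * x ∈ I ∧ x * a ∈ I

theorem IsTwoSidedIdeal.comap {C : Type*} [NonUnitalNormedRing C] [NormedSpace ℂ C]
    {I : Submodule ℂ B} (hI : IsTwoSidedIdeal I) {φ : C →L[ℂ] B}
    (hφ : ∀ x y, φ (x * y) = φ x * φ y) : IsTwoSidedIdeal (I.comap (φ : C →ₗ[ℂ] B)) :=
  fun a x hx => by simpa [hφ] using hI (φ a) (φ x) hx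

variable {I : Submodule ℂ B}

/-- `D (a * b) = a • D b + D a • b` for the actions `(a • f) i = f (i * a)`, `(f • a) i = f (a * i)`
of `B` on `I*`. -/
def IsDualDerivation (hI : IsTwoSidedIdeal I) (D : B →L[ℂ] I →L[ℂ] ℂ) : Prop :=
  ∀ a b : B, ∀ i : I,
    D (a * b) i = D b ⟨i * a, (hI a i i.2).2⟩ + D a ⟨b * i, (hI b i i.2).1⟩

def IsInnerDualDerivation (hI : IsTwoSidedIdeal I) (D : B →L[ℂ] I →L[ℂ] ℂ) : Prop :=
  ∃ f : I →L[ℂ] ℂ, ∀ a : B, ∀ i : I,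
    D a i = f ⟨i * a - a * i, I.sub_mem (hI a i i.2).2 (hI a i i.2).1⟩

variable (B) in
def IsIdeallyAmenable : Prop :=
  ∀ I : Submodule ℂ B, IsClosed (I : Set B) → ∀ hI : IsTwoSidedIdeal I,
    ∀ D : B →L[ℂ] I →L[ℂ] ℂ, IsDualDerivation hI D → IsInnerDualDerivation hI D

theorem IsDualDerivation.sub {hI : IsTwoSidedIdeal I} {D D' : B →L[ℂ] I →L[ℂ] ℂ}
    (hD : IsDualDerivation hI D) (hD' : IsDualDerivation hI D') :
    IsDualDerivation hI (D - D') := by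
  intro a b i
  simp only [sub_apply, hD a b i, hD' a b i]
  ring

section Pullback

variable {C : Type*} [NonUnitalNormedRing C] [NormedSpace ℂ C] {J : Submodule ℂ C}
  {hI : IsTwoSidedIdeal I} {hJ : IsTwoSidedIdeal J} {D : B →L[ℂ] I →L[ℂ] ℂ}
  {φ : C →L[ℂ] B} {u : J →L[ℂ] I}

theorem IsDualDerivation.comp (hD : IsDualDerivation hI D) (hφ : ∀ x y, φ (x * y) = φ x * φ y)
    (hu : ∀ j, (u j : B) = φ j) :
    IsDualDerivation hJ ((precomp ℂ u).comp (D.comp φ)) := by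
  intro a b j
  simp only [coe_comp, Function.comp_apply, precomp_apply, hφ, hD (φ a) (φ b) (u j)]
  congr 2 <;> ext <;> simp [hu, hφ]

theorem IsInnerDualDerivation.comp (hD : IsInnerDualDerivation hI D)
    (hφ : ∀ x y, φ (x * y) = φ x * φ y) (hu : ∀ j, (u j : B) = φ j) :
    IsInnerDualDerivation hJ ((precomp ℂ u).comp (D.comp φ)) := by
  obtain ⟨f, hf⟩ := hD
  refine ⟨f.comp u, fun a j => ?_⟩
  simp only [coe_comp, Function.comp_apply, precomp_apply, hf]
  congr 1
  ext
  simp [hu, hφ]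

end Pullback

section Inner

variable [IsScalarTower ℂ B B] [SMulCommClass ℂ B B] (hI : IsTwoSidedIdeal I)

noncomputable def innerDualDerivation (f : I →L[ℂ] ℂ) : B →L[ℂ] I →L[ℂ] ℂ :=
  LinearMap.mkContinuous₂
    (LinearMap.mk₂ ℂ
      (fun a (i : I) => f ⟨i * a - a * i, I.sub_mem (hI a i i.2).2 (hI a i i.2).1⟩)
      (fun a b i => by
        rw [← map_add]; congr 1; ext; simp only [mul_add, add_mul, Submodule.coe_add]; abel)
      (fun c a i => by
        rw [← map_smul]; congr 1; ext; simp [mul_smul_comm, smul_mul_assoc, smul_sub])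
      (fun a i j => by
        rw [← map_add]; congr 1; ext; simp only [mul_add, add_mul, Submodule.coe_add]; abel)
      (fun c a i => by
        rw [← map_smul]; congr 1; ext; simp [mul_smul_comm, smul_mul_assoc, smul_sub]))
    (2 * ‖f‖) fun a i => by
      calc _ ≤ ‖f‖ * ‖(i : B) * a - a * i‖ := f.le_opNorm _
        _ ≤ ‖f‖ * (‖(i : B)‖ * ‖a‖ + ‖a‖ * ‖(i : B)‖) := by
          gcongr
          exact (norm_sub_le _ _).trans (add_le_add (norm_mul_le _ _) (norm_mul_le _ _))
        _ = 2 * ‖f‖ * ‖a‖ * ‖i‖ := by rw [Submodule.coe_norm]; ring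

@[simp]
theorem innerDualDerivation_apply (f : I →L[ℂ] ℂ) (a : B) (i : I) :
    innerDualDerivation hI f a i = f ⟨i * a - a * i, I.sub_mem (hI a i i.2).2 (hI a i i.2).1⟩ :=
  rfl

theorem isDualDerivation_innerDualDerivation (f : I →L[ℂ] ℂ) :
    IsDualDerivation hI (innerDualDerivation hI f) := by
  intro a b i
  simp only [innerDualDerivation_apply, ← map_add]
  congr 1
  ext
  simp only [Submodule.coe_add]
  noncomm_ring

end Inner

/-- `D a i = ψ a * ψ i` is a derivation `B → B*`; its innerness gives `ψ a * ψ a = 0`. -/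
theorem IsIdeallyAmenable.eq_zero_of_map_mul_eq_zero (hB : IsIdeallyAmenable B)
    (ψ : B →L[ℂ] ℂ) (hψ : ∀ a b, ψ (a * b) = 0) : ψ = 0 := by
  have htop : IsTwoSidedIdeal (⊤ : Submodule ℂ B) := fun _ _ _ => ⟨trivial, trivial⟩
  obtain ⟨f, hf⟩ := hB ⊤ (by simp) htop (ψ.smulRight (ψ.comp (⊤ : Submodule ℂ B).subtypeL))
    (fun a b i => by simp [hψ])
  ext a
  have h := hf a ⟨a, trivial⟩
  simp only [sub_self] at h
  rw [show (⟨0, _⟩ : ↥(⊤ : Submodule ℂ B)) = 0 from rfl, map_zero] at h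
  simpa using h

end Derivations

theorem IsDualDerivation.map_one {B : Type*} [NormedRing B] [NormedSpace ℂ B]
    {I : Submodule ℂ B} {hI : IsTwoSidedIdeal I} {D : B →L[ℂ] I →L[ℂ] ℂ}
    (hD : IsDualDerivation hI D) : D 1 = 0 := by
  ext i
  simpa using hD 1 1 i

section Unitization

variable {A : Type*} [NonUnitalNormedRing A] [NormedSpace ℂ A]
  [IsScalarTower ℂ A A] [SMulCommClass ℂ A A]

local notation "𝔄" => WithLp 1 (Unitization ℂ A)

namespace UnitizationL1

open WithLp

noncomputable def fstL : 𝔄 →L[ℂ] ℂ :=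
  LinearMap.mkContinuous
    ((Unitization.fstHom ℂ A).toLinearMap ∘ₗ (WithLp.linearEquiv 1 ℂ _).toLinearMap) 1
    fun x => by simp [unitization_norm_def]

noncomputable def sndL : 𝔄 →L[ℂ] A :=
  LinearMap.mkContinuous
    (Unitization.sndHom ℂ ℂ A ∘ₗ (WithLp.linearEquiv 1 ℂ _).toLinearMap) 1
    fun x => by simp [unitization_norm_def]

noncomputable def inrL : A →L[ℂ] 𝔄 :=
  LinearMap.mkContinuous
    ((WithLp.linearEquiv 1 ℂ _).symm.toLinearMap ∘ₗ Unitization.inrHom ℂ ℂ A) 1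
    fun a => by simp [unitization_norm_inr]

theorem fstL_apply (x : 𝔄) : fstL x = (ofLp x).fst := rfl
theorem sndL_apply (x : 𝔄) : sndL x = (ofLp x).snd := rfl

@[simp] theorem fstL_inrL (a : A) : fstL (inrL a) = 0 := rfl
@[simp] theorem sndL_inrL (a : A) : sndL (inrL a) = a := rfl
@[simp] theorem fstL_one : fstL (1 : 𝔄) = 1 := rfl
@[simp] theorem sndL_one : sndL (1 : 𝔄) = 0 := rfl

@[simp] theorem fstL_mul (x y : 𝔄) : fstL (x * y) = fstL x * fstL y := by
  simp [fstL_apply]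

theorem sndL_mul (x y : 𝔄) :
    sndL (x * y) = fstL x • sndL y + fstL y • sndL x + sndL x * sndL y := by
  simp [fstL_apply, sndL_apply]

theorem inrL_mul (a b : A) : inrL (a * b) = inrL a * inrL b := by
  simp [inrL, ← (WithLp.ofLp_injective 1).eq_iff]

theorem ext_fstL_sndL {x y : 𝔄} (h1 : fstL x = fstL y) (h2 : sndL x = sndL y) : x = y :=
  (WithLp.ofLp_injective 1) (Unitization.ext h1 h2)

theorem inrL_sndL_of_fstL_eq_zero {x : 𝔄} (hx : fstL x = 0) : inrL (sndL x) = x :=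
  ext_fstL_sndL (by simp [hx]) (by simp)

theorem inrL_sndL_add_fstL_smul_one (x : 𝔄) : inrL (sndL x) + fstL x • 1 = x :=
  ext_fstL_sndL (by simp) (by simp)

theorem exists_retraction_sndL (I : Submodule ℂ 𝔄) :
    ∃ p : I →L[ℂ] I.comap (inrL (A := A) : A →ₗ[ℂ] 𝔄),
      ∀ k : I, fstL (k : 𝔄) = 0 → (p k : A) = sndL k := by
  obtain ⟨e, he1, he⟩ : ∃ e : 𝔄, fstL e = 1 ∧ ∀ i ∈ I, fstL i • e ∈ I := by
    by_cases h : ∀ i ∈ I, fstL i = 0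
    · exact ⟨1, fstL_one, fun k hk => by simp [h k hk]⟩
    · obtain ⟨i, hi, hi0⟩ := not_forall₂.mp h
      exact ⟨(fstL i)⁻¹ • i, by simp [hi0], fun k _ => I.smul_mem _ (I.smul_mem _ hi)⟩
  have hmem (k : I) : inrL (sndL ((k : 𝔄) - fstL (k : 𝔄) • e)) ∈ I := by
    rw [inrL_sndL_of_fstL_eq_zero (by simp [he1])]
    exact I.sub_mem k.2 (he k k.2)
  exact ⟨(sndL.comp (I.subtypeL - (fstL.comp I.subtypeL).smulRight e)).codRestrict _ hmem,
    fun k hk => by simp [hk]⟩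

noncomputable def inrIdeal (I : Submodule ℂ A) : Submodule ℂ 𝔄 :=
  I.comap sndL.toLinearMap ⊓ LinearMap.ker fstL.toLinearMap

theorem isClosed_inrIdeal {I : Submodule ℂ A} (hIc : IsClosed (I : Set A)) :
    IsClosed (inrIdeal I : Set 𝔄) :=
  (hIc.preimage sndL.continuous).inter (isClosed_singleton.preimage fstL.continuous)

theorem isTwoSidedIdeal_inrIdeal {I : Submodule ℂ A} (hI : IsTwoSidedIdeal I) :
    IsTwoSidedIdeal (inrIdeal I) := by
  rintro a x ⟨hxI, hx0 : fstL x = 0⟩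
  refine ⟨⟨?_, ?_⟩, ⟨?_, ?_⟩⟩
  · simpa [sndL_mul, hx0] using I.add_mem (I.smul_mem (fstL a) hxI) (hI _ _ hxI).1
  · simp [LinearMap.mem_ker, hx0]
  · simpa [sndL_mul, hx0] using I.add_mem (I.smul_mem (fstL a) hxI) (hI _ _ hxI).2
  · simp [LinearMap.mem_ker, hx0]

noncomputable def sndInrIdeal (I : Submodule ℂ A) : inrIdeal I →L[ℂ] I :=
  (sndL.comp (inrIdeal I).subtypeL).codRestrict I fun k => k.2.1

end UnitizationL1

open UnitizationL1

theorem IsDualDerivation.unitization {I : Submodule ℂ A} {hI : IsTwoSidedIdeal I}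
    {D : A →L[ℂ] I →L[ℂ] ℂ} (hD : IsDualDerivation hI D) :
    IsDualDerivation (isTwoSidedIdeal_inrIdeal hI)
      ((precomp ℂ (sndInrIdeal I)).comp (D.comp sndL)) := by
  rintro x y ⟨k, hkI, hk0 : fstL k = 0⟩
  have hk : sndInrIdeal I ⟨k, hkI, hk0⟩ = ⟨sndL k, hkI⟩ := rfl
  have hkx : sndInrIdeal I ⟨k * x, (isTwoSidedIdeal_inrIdeal hI x k ⟨hkI, hk0⟩).2⟩ =
      fstL x • ⟨sndL k, hkI⟩ + ⟨sndL k * sndL x, (hI _ _ hkI).2⟩ :=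
    Subtype.ext (show sndL (k * x) = _ by simp [sndL_mul, hk0])
  have hyk : sndInrIdeal I ⟨y * k, (isTwoSidedIdeal_inrIdeal hI y k ⟨hkI, hk0⟩).1⟩ =
      fstL y • ⟨sndL k, hkI⟩ + ⟨sndL y * sndL k, (hI _ _ hkI).1⟩ :=
    Subtype.ext (show sndL (y * k) = _ by simp [sndL_mul, hk0, add_comm])
  simp only [coe_comp, Function.comp_apply, precomp_apply, hk, hkx, hyk, sndL_mul, map_add,
    map_smul, add_apply, smul_apply, hD (sndL x) (sndL y)]
  ring

/-- On an element `e ∈ I` with scalar part `1`, the difference of the two derivations gives a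
functional `a ↦ (D - D') a e` on `A` killing all products. -/
theorem IsDualDerivation.ext_of_unitization (hA : IsIdeallyAmenable A)
    {I : Submodule ℂ 𝔄} {hI : IsTwoSidedIdeal I} {D D' : 𝔄 →L[ℂ] I →L[ℂ] ℂ}
    (hD : IsDualDerivation hI D) (hD' : IsDualDerivation hI D')
    (h : ∀ a (k : I), fstL (k : 𝔄) = 0 → D (inrL a) k = D' (inrL a) k) : D = D' := by
  have hΔ : IsDualDerivation hI (D - D') := hD.sub hD'
  have hker (a : A) (k : I) (hk : fstL (k : 𝔄) = 0) : (D - D') (inrL a) k = 0 := by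
    simp [h a k hk]
  have hunit (e : I) (he : fstL (e : 𝔄) = 1) (a : A) : D (inrL a) e = D' (inrL a) e := by
    have hψ := hA.eq_zero_of_map_mul_eq_zero (((D - D').comp inrL).flip e) fun a b => by
      rw [flip_apply, comp_apply, inrL_mul, hΔ, hker _ _ (by simp), hker _ _ (by simp), add_zero]
    simpa [sub_eq_zero] using congr($hψ a)
  have hinr (a : A) : D (inrL a) = D' (inrL a) := by
    ext i
    by_cases hi : fstL (i : 𝔄) = 0
    · exact h a i hi
    · calc D (inrL a) i = fstL (i : 𝔄) • D (inrL a) ((fstL (i : 𝔄))⁻¹ • i) := by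
            rw [← map_smul, smul_inv_smul₀ hi]
        _ = fstL (i : 𝔄) • D' (inrL a) ((fstL (i : 𝔄))⁻¹ • i) := by
            rw [hunit _ (by simp [hi])]
        _ = D' (inrL a) i := by rw [← map_smul, smul_inv_smul₀ hi]
  ext x i
  rw [← inrL_sndL_add_fstL_smul_one x, map_add, map_add, map_smul, map_smul, hD.map_one,
    hD'.map_one, hinr]

theorem IsIdeallyAmenable.unitization (hA : IsIdeallyAmenable A) : IsIdeallyAmenable 𝔄 := by
  intro I hIc hI D hD
  set J := I.comap (inrL (A := A) : A →ₗ[ℂ] 𝔄)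
  let u : J →L[ℂ] I := (inrL.comp J.subtypeL).codRestrict I fun j => j.2
  obtain ⟨g, hg⟩ := hA J (hIc.preimage inrL.continuous) (hI.comap inrL_mul) _
    (hD.comp inrL_mul (u := u) fun _ => rfl)
  obtain ⟨p, hp⟩ := exists_retraction_sndL I
  suffices hDg : D = innerDualDerivation hI (g.comp p) from
    ⟨g.comp p, fun x i => by rw [hDg]; rfl⟩
  refine hD.ext_of_unitization hA (isDualDerivation_innerDualDerivation hI _) fun a k hk => ?_
  have hkJ : sndL (k : 𝔄) ∈ J := by
    show inrL _ ∈ I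
    rw [inrL_sndL_of_fstL_eq_zero hk]
    exact k.2
  have hgk := hg a ⟨_, hkJ⟩
  have huk : u ⟨_, hkJ⟩ = k := Subtype.ext (inrL_sndL_of_fstL_eq_zero hk)
  simp only [coe_comp, Function.comp_apply, precomp_apply, huk] at hgk
  rw [hgk, innerDualDerivation_apply, coe_comp, Function.comp_apply]
  congr 1
  ext
  rw [hp _ (by simp [hk])]
  simp [sndL_mul, hk]

theorem IsIdeallyAmenable.of_unitization (h : IsIdeallyAmenable 𝔄) : IsIdeallyAmenable A := by
  intro I hIc hI D hD
  let w : I →L[ℂ] inrIdeal I := (inrL.comp I.subtypeL).codRestrict _ fun j => ⟨j.2, fstL_inrL _⟩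
  exact (h _ (isClosed_inrIdeal hIc) _ _ hD.unitization).comp inrL_mul (u := w) fun _ => rfl

end Unitization

theorem ideallyAmenable_iff_unitization_ideallyAmenable_general
    {A : Type*} [NonUnitalNormedRing A] [NormedSpace ℂ A]
    [IsScalarTower ℂ A A] [SMulCommClass ℂ A A] :
    -- `A` is ideally amenable
    (∀ I : Submodule ℂ A, IsClosed (I : Set A) →
      ∀ hI : (∀ a : A, ∀ x ∈ I, a * x ∈ I ∧ x * a ∈ I),
      ∀ D : A →L[ℂ] (↥I →L[ℂ] ℂ),
        (∀ a b : A, ∀ i : ↥I,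
          D (a * b) i = D b ⟨(i : A) * a, (hI a i i.2).2⟩ +
            D a ⟨b * (i : A), (hI b i i.2).1⟩) →
        ∃ f : ↥I →L[ℂ] ℂ, ∀ a : A, ∀ i : ↥I,
          D a i = f ⟨(i : A) * a - a * (i : A),
            I.sub_mem (hI a i i.2).2 (hI a i i.2).1⟩) ↔
    -- `A#` is ideally amenable
    (∀ I : Submodule ℂ (WithLp 1 (Unitization ℂ A)),
      IsClosed (I : Set (WithLp 1 (Unitization ℂ A))) →
      ∀ hI : (∀ a : WithLp 1 (Unitization ℂ A), ∀ x ∈ I, a * x ∈ I ∧ x * a ∈ I),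
      ∀ D : (WithLp 1 (Unitization ℂ A)) →L[ℂ] (↥I →L[ℂ] ℂ),
        (∀ a b : WithLp 1 (Unitization ℂ A), ∀ i : ↥I,
          D (a * b) i = D b ⟨(i : WithLp 1 (Unitization ℂ A)) * a, (hI a i i.2).2⟩ +
            D a ⟨b * (i : WithLp 1 (Unitization ℂ A)), (hI b i i.2).1⟩) →
        ∃ f : ↥I →L[ℂ] ℂ, ∀ a : WithLp 1 (Unitization ℂ A), ∀ i : ↥I,
          D a i = f ⟨(i : WithLp 1 (Unitization ℂ A)) * a - a * (i : WithLp 1 (Unitization ℂ A)),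
            I.sub_mem (hI a i i.2).2 (hI a i i.2).1⟩) :=
  ⟨IsIdeallyAmenable.unitization, IsIdeallyAmenable.of_unitization⟩

/-- A Banach algebra `A` is ideally amenable if and only if its
unitization `A# = A ⊕ ℂ1` (with norm `‖a + λ1‖ = ‖a‖ + |λ|`, realized in Mathlib as
`WithLp 1 (Unitization ℂ A)`) is ideally amenable. -/
theorem ideallyAmenable_iff_unitization_ideallyAmenable
    {A : Type*} [NonUnitalNormedRing A] [NormedSpace ℂ A]
    [IsScalarTower ℂ A A] [SMulCommClass ℂ A A] [CompleteSpace A] :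
    -- `A` is ideally amenable
    (∀ I : Submodule ℂ A, IsClosed (I : Set A) →
      ∀ hI : (∀ a : A, ∀ x ∈ I, a * x ∈ I ∧ x * a ∈ I),
      ∀ D : A →L[ℂ] (↥I →L[ℂ] ℂ),
        (∀ a b : A, ∀ i : ↥I,
          D (a * b) i = D b ⟨(i : A) * a, (hI a i i.2).2⟩ +
            D a ⟨b * (i : A), (hI b i i.2).1⟩) →
        ∃ f : ↥I →L[ℂ] ℂ, ∀ a : A, ∀ i : ↥I,
          D a i = f ⟨(i : A) * a - a * (i : A),
            I.sub_mem (hI a i i.2).2 (hI a i i.2).1⟩) ↔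
    -- `A#` is ideally amenable
    (∀ I : Submodule ℂ (WithLp 1 (Unitization ℂ A)),
      IsClosed (I : Set (WithLp 1 (Unitization ℂ A))) →
      ∀ hI : (∀ a : WithLp 1 (Unitization ℂ A), ∀ x ∈ I, a * x ∈ I ∧ x * a ∈ I),
      ∀ D : (WithLp 1 (Unitization ℂ A)) →L[ℂ] (↥I →L[ℂ] ℂ),
        (∀ a b : WithLp 1 (Unitization ℂ A), ∀ i : ↥I,
          D (a * b) i = D b ⟨(i : WithLp 1 (Unitization ℂ A)) * a, (hI a i i.2).2⟩ +
            D a ⟨b * (i : WithLp 1 (Unitization ℂ A)), (hI b i i.2).1⟩) →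
        ∃ f : ↥I →L[ℂ] ℂ, ∀ a : WithLp 1 (Unitization ℂ A), ∀ i : ↥I,
          D a i = f ⟨(i : WithLp 1 (Unitization ℂ A)) * a - a * (i : WithLp 1 (Unitization ℂ A)),
            I.sub_mem (hI a i i.2).2 (hI a i i.2).1⟩) :=
  ideallyAmenable_iff_unitization_ideallyAmenable_general
end

section
/- Let A be a Banach algebra over ℂ and let I be a closed two-sided ideal of A. If the Banach algebra I is weakly amenable (every derivation from I into I* with the I-bimodule actions is inner), then A is I-weakly amenable: every derivation from A into I* (with the A-bimodule actions) is inner. -/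
/-- If a closed two-sided ideal `I` of a Banach algebra `A` is weakly
amenable as a Banach algebra, then `A` is `I`-weakly amenable. -/
theorem iWeaklyAmenable_of_weaklyAmenable_ideal
    {A : Type*} [NonUnitalNormedRing A] [NormedSpace ℂ A]
    [IsScalarTower ℂ A A] [SMulCommClass ℂ A A] [CompleteSpace A]
    (I : Submodule ℂ A) (hIclosed : IsClosed (I : Set A))
    (hI : ∀ a : A, ∀ x ∈ I, a * x ∈ I ∧ x * a ∈ I)
    -- `I` is weakly amenable: every derivation from `I` into `I*` is inner
    (hWA : ∀ D : ↥I →L[ℂ] (↥I →L[ℂ] ℂ),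
      (∀ x y i : ↥I,
        D ⟨(x : A) * (y : A), (hI x y y.2).1⟩ i =
          D y ⟨(i : A) * (x : A), (hI x i i.2).2⟩ +
          D x ⟨(y : A) * (i : A), (hI y i i.2).1⟩) →
      ∃ f : ↥I →L[ℂ] ℂ, ∀ x i : ↥I,
        D x i = f ⟨(i : A) * (x : A) - (x : A) * (i : A),
          I.sub_mem (hI x i i.2).2 (hI x i i.2).1⟩) :
    -- then `A` is `I`-weakly amenable
    ∀ D : A →L[ℂ] (↥I →L[ℂ] ℂ),
      (∀ a b : A, ∀ i : ↥I,
        D (a * b) i = D b ⟨(i : A) * a, (hI a i i.2).2⟩ +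
          D a ⟨b * (i : A), (hI b i i.2).1⟩) →
      ∃ f : ↥I →L[ℂ] ℂ, ∀ a : A, ∀ i : ↥I,
        D a i = f ⟨(i : A) * a - a * (i : A),
          I.sub_mem (hI a i i.2).2 (hI a i i.2).1⟩ := by
  intro D hD
  -- Restrict `D` to `I`; it is a derivation from `I` into `I*`, hence inner via some `f`.
  obtain ⟨f, hf⟩ := hWA (D.comp I.subtypeL) (by
    intro x y i
    simpa using hD (x : A) (y : A) i)
  have hf' : ∀ (x : ↥I) (i : ↥I), D (x : A) i =
      f ⟨(i : A) * (x : A) - (x : A) * (i : A),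
        I.sub_mem (hI x i i.2).2 (hI x i i.2).1⟩ := by
    intro x i; exact hf x i
  -- Key lemma: any functional on `I` vanishing on products is zero
  -- (this uses weak amenability of `I` again).
  have key : ∀ g : ↥I →L[ℂ] ℂ,
      (∀ x y : ↥I, ∀ h : (x : A) * (y : A) ∈ I, g ⟨(x : A) * (y : A), h⟩ = 0) →
      ∀ i : ↥I, g i = 0 := by
    intro g hg
    obtain ⟨f', hg'⟩ := hWA (g.smulRight g) (by
      intro x y i
      simp only [ContinuousLinearMap.smulRight_apply, ContinuousLinearMap.smul_apply,
        smul_eq_mul]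
      rw [hg x y _, hg i x _, hg y i _]
      ring)
    intro i
    have h1 := hg' i i
    have h2 : (⟨(i : A) * (i : A) - (i : A) * (i : A),
        I.sub_mem (hI i i i.2).2 (hI i i i.2).1⟩ : ↥I) = 0 := by
      apply Subtype.ext; simp
    rw [h2, map_zero] at h1
    simp only [ContinuousLinearMap.smulRight_apply, ContinuousLinearMap.smul_apply,
      smul_eq_mul] at h1
    exact mul_self_eq_zero.mp h1
  refine ⟨f, fun a i => ?_⟩
  -- The continuous map `j ↦ j*a - a*j` from `I` to `I`.
  set T : ↥I →L[ℂ] ↥I :=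
    ContinuousLinearMap.codRestrict
      ((((ContinuousLinearMap.mul ℂ A).flip a) - (ContinuousLinearMap.mul ℂ A a)).comp
        I.subtypeL) I
      (fun j => I.sub_mem (hI a j j.2).2 (hI a j j.2).1) with hT
  have hTapp : ∀ j : ↥I, T j = ⟨(j : A) * a - a * (j : A),
      I.sub_mem (hI a j j.2).2 (hI a j j.2).1⟩ := by
    intro j; apply Subtype.ext; rfl
  -- The functional `D a - f ∘ T` vanishes on products in `I`.
  have hzero := key (D a - f.comp T) (by
    intro x y h
    simp only [ContinuousLinearMap.sub_apply, ContinuousLinearMap.comp_apply, hTapp]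
    have h4 : D a (⟨(x : A) * (y : A), h⟩ : ↥I) =
        D ((y : A) * a) x - D (y : A) ⟨a * (x : A), (hI a x x.2).1⟩ := by
      rw [eq_sub_iff_add_eq]
      exact (hD (y : A) a x).symm
    have h2 : D ((y : A) * a) x =
        f ⟨(x : A) * ((y : A) * a) - (y : A) * a * (x : A),
          I.sub_mem (hI ((y : A) * a) x x.2).2 (hI ((y : A) * a) x x.2).1⟩ :=
      hf' ⟨(y : A) * a, (hI a y y.2).2⟩ x
    have h3 : D (y : A) ⟨a * (x : A), (hI a x x.2).1⟩ =
        f ⟨a * (x : A) * (y : A) - (y : A) * (a * (x : A)),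
          I.sub_mem (hI (a * (x : A)) y y.2).1 (hI (a * (x : A)) y y.2).2⟩ :=
      hf' y ⟨a * (x : A), (hI a x x.2).1⟩
    rw [h4, h2, h3, ← map_sub, ← map_sub]
    convert map_zero f using 2
    apply Subtype.ext
    simp only [AddSubgroupClass.coe_sub, ZeroMemClass.coe_zero]
    noncomm_ring)
  have hz := hzero i
  simp only [ContinuousLinearMap.sub_apply, ContinuousLinearMap.comp_apply, hTapp] at hz
  exact sub_eq_zero.mp hz
end

section
/- Let A be a unital commutative Banach algebra over ℂ and let M be a closed ideal of A of codimension one. If A is M-weakly amenable, then A is weakly amenable: every derivation from A into A* is inner (equivalently, since A is commutative, zero). -/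
/-!
Restricting `D` to `M` gives a derivation into `M*`, which is inner, hence zero since `A` is
commutative; so every `D a` vanishes on `M`. As `A = ℂ1 ⊕ M`, `D a b = χ b * d a`, where `χ` is
the character with kernel `M` and `d = D (·) 1` is a point derivation at `χ`. Then
`a ↦ d a • d|_M` is again a derivation into `M*`, hence zero, so `d m ^ 2 = 0` on `M`; together
with `d 1 = 0` this forces `d = 0`, and therefore `D = 0`.
-/

namespace Submodule

variable {K V : Type*} [Field K] [AddCommGroup V] [Module K V] {M : Submodule K V}

theorem exists_sub_smul_mem_of_finrank_quotient_eq_one (hM : Module.finrank K (V ⧸ M) = 1)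
    {x : V} (hx : x ∉ M) (v : V) : ∃ c : K, v - c • x ∈ M := by
  have hx' : (Quotient.mk x : V ⧸ M) ≠ 0 := by rwa [Ne, Quotient.mk_eq_zero]
  obtain ⟨c, hc⟩ := (finrank_eq_one_iff_of_nonzero' _ hx').1 hM (Quotient.mk v)
  refine ⟨c, ?_⟩
  rwa [← Quotient.eq, eq_comm, Quotient.mk_smul]

theorem eq_zero_of_sub_smul_mem {x m : V} {c : K} (hx : x ∉ M) (hm : m ∈ M)
    (h : m - c • x ∈ M) : c = 0 := by
  by_contra hc
  refine hx ((M.smul_mem_iff hc).1 ?_)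
  simpa using M.sub_mem hm h

theorem one_notMem_of_finrank_quotient_ne_zero {A : Type*} [Ring A] [Module K A]
    {I : Submodule K A} (hI : ∀ a : A, ∀ x ∈ I, a * x ∈ I)
    (hfin : Module.finrank K (A ⧸ I) ≠ 0) : (1 : A) ∉ I := by
  intro h1
  have hI_top : I = ⊤ := eq_top_iff'.2 fun a => by simpa using hI a 1 h1
  have : Subsingleton (A ⧸ I) := Quotient.subsingleton_iff.2 hI_top
  exact hfin Module.finrank_zero_of_subsingleton

theorem mk_mul_sub_mul_eq_zero {A : Type*} [CommRing A] [Module K A] {I : Submodule K A}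
    {a m : A} (h : m * a - a * m ∈ I) : (⟨m * a - a * m, h⟩ : I) = 0 := by
  simp [mul_comm]

end Submodule

theorem map_eq_smul_of_sub_smul_mem {K V W F : Type*} [Field K] [AddCommGroup V] [Module K V]
    [AddCommGroup W] [Module K W] [FunLike F V W] [LinearMapClass F K V W] {M : Submodule K V}
    (f : F) (hf : ∀ m ∈ M, f m = 0) {v x : V} {c : K} (h : v - c • x ∈ M) : f v = c • f x := by
  simpa [sub_eq_zero] using hf _ h

def IsPointDerivation {A K : Type*} [Mul A] [Mul K] [Add K] (χ d : A → K) : Prop :=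
  ∀ a b, d (a * b) = χ a * d b + χ b * d a

/-- On `ker χ`, `a ↦ d a • d` satisfies the derivation identity of the dual module of `ker χ`. -/
theorem IsPointDerivation.mul_apply_ker {A K : Type*} [CommRing A] [CommRing K] {χ d : A → K}
    (hd : IsPointDerivation χ d) {m : A} (hm : χ m = 0) (a b : A) :
    d (a * b) * d m = d b * d (m * a) + d a * d (b * m) := by
  rw [hd a b, hd m a, hd b m, hm]
  ring

theorem weaklyAmenable_of_mWeaklyAmenable_unital_commutative_general
    {A : Type*} [NormedCommRing A] [NormedAlgebra ℂ A]
    -- `M` is a closed ideal of codimension one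
    (M : Submodule ℂ A)
    (hM : ∀ a : A, ∀ x ∈ M, a * x ∈ M ∧ x * a ∈ M)
    (hcodim : Module.finrank ℂ (A ⧸ M) = 1)
    -- `A` is `M`-weakly amenable
    (hMWA : ∀ D : A →L[ℂ] (↥M →L[ℂ] ℂ),
      (∀ a b : A, ∀ m : ↥M,
        D (a * b) m = D b ⟨(m : A) * a, (hM a m m.2).2⟩ +
          D a ⟨b * (m : A), (hM b m m.2).1⟩) →
      ∃ f : ↥M →L[ℂ] ℂ, ∀ a : A, ∀ m : ↥M,
        D a m = f ⟨(m : A) * a - a * (m : A),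
          M.sub_mem (hM a m m.2).2 (hM a m m.2).1⟩) :
    -- then `A` is weakly amenable
    ∀ D : A →L[ℂ] (A →L[ℂ] ℂ),
      (∀ a b c : A, D (a * b) c = D b (c * a) + D a (b * c)) →
      ∃ f : A →L[ℂ] ℂ, ∀ a b : A, D a b = f (b * a - a * b) := by
  intro D hD
  have derivation_eq_zero : ∀ E : A →L[ℂ] (↥M →L[ℂ] ℂ),
      (∀ a b : A, ∀ m : ↥M,
        E (a * b) m = E b ⟨(m : A) * a, (hM a m m.2).2⟩ +
          E a ⟨b * (m : A), (hM b m m.2).1⟩) → ∀ a : A, ∀ m : ↥M, E a m = 0 := by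
    intro E hE a m
    obtain ⟨f, hf⟩ := hMWA E hE
    rw [hf, Submodule.mk_mul_sub_mul_eq_zero, map_zero]
  have h1 : (1 : A) ∉ M :=
    Submodule.one_notMem_of_finrank_quotient_ne_zero (fun a x hx => (hM a x hx).1) (by simp [hcodim])
  choose χ hχ using Submodule.exists_sub_smul_mem_of_finrank_quotient_eq_one hcodim h1
  have hDM : ∀ a, ∀ m ∈ M, D a m = 0 := fun a m hm =>
    derivation_eq_zero ((ContinuousLinearMap.compL ℂ M A ℂ).flip M.subtypeL ∘L D)
      (fun a b m => hD a b m) a ⟨m, hm⟩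
  set d := D.flip 1
  have hDd : ∀ a b, D a b = χ b * d a := fun a b =>
    map_eq_smul_of_sub_smul_mem (D a) (hDM a) (hχ b)
  have hd : IsPointDerivation χ d := fun a b => by
    change D (a * b) 1 = _
    rw [hD a b 1, one_mul, mul_one, hDd b a, hDd a b]
  have hdM : ∀ m ∈ M, d m = 0 := fun m hm => by
    have := derivation_eq_zero (d.smulRight (d ∘L M.subtypeL))
      (fun a b m' => hd.mul_apply_ker (Submodule.eq_zero_of_sub_smul_mem h1 m'.2 (hχ m')) a b)
      m ⟨m, hm⟩
    simpa only [ContinuousLinearMap.smulRight_apply, smul_apply, ContinuousLinearMap.comp_apply,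
      Submodule.subtypeL_apply, smul_eq_mul, mul_self_eq_zero] using this
  have hd1 : d 1 = 0 := by
    change D 1 1 = 0
    simpa using hD 1 1 1
  refine ⟨0, fun a b => ?_⟩
  rw [hDd, map_eq_smul_of_sub_smul_mem d hdM (hχ a)]
  simp [hd1]

/-- Let `A` be a unital commutative Banach algebra and `M` a closed
ideal of codimension one. If `A` is `M`-weakly amenable, then `A` is weakly amenable. -/
theorem weaklyAmenable_of_mWeaklyAmenable_unital_commutative
    {A : Type*} [NormedCommRing A] [NormedAlgebra ℂ A] [CompleteSpace A]
    -- `M` is a closed ideal of codimension one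
    (M : Submodule ℂ A) (hMclosed : IsClosed (M : Set A))
    (hM : ∀ a : A, ∀ x ∈ M, a * x ∈ M ∧ x * a ∈ M)
    (hcodim : Module.finrank ℂ (A ⧸ M) = 1)
    -- `A` is `M`-weakly amenable
    (hMWA : ∀ D : A →L[ℂ] (↥M →L[ℂ] ℂ),
      (∀ a b : A, ∀ m : ↥M,
        D (a * b) m = D b ⟨(m : A) * a, (hM a m m.2).2⟩ +
          D a ⟨b * (m : A), (hM b m m.2).1⟩) →
      ∃ f : ↥M →L[ℂ] ℂ, ∀ a : A, ∀ m : ↥M,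
        D a m = f ⟨(m : A) * a - a * (m : A),
          M.sub_mem (hM a m m.2).2 (hM a m m.2).1⟩) :
    -- then `A` is weakly amenable
    ∀ D : A →L[ℂ] (A →L[ℂ] ℂ),
      (∀ a b c : A, D (a * b) c = D b (c * a) + D a (b * c)) →
      ∃ f : A →L[ℂ] ℂ, ∀ a b : A, D a b = f (b * a - a * b) :=
  weaklyAmenable_of_mWeaklyAmenable_unital_commutative_general M hM hcodim hMWA
end
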